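/- arXiv:2402.17693 — 7 statements merged into one kernel-verified Lean document; each statement's English description precedes it below -/
import Mathlib

section
/- For every 2×2 complex unitary matrix U there exist unique real numbers β₀, β₁, β₂, β₃ with β₀, β₁, β₃ ∈ [0, 2π), β₂ ∈ [0, π/2], and β₁ = 0 whenever β₂ = 0 or β₂ = π/2, such that U equals the matrix with entries U₁₁ = e^{iβ₀}·cos β₂, U₁₂ = i·e^{i(β₀+β₁)}·sin β₂, U₂₁ = i·e^{iβ₃}·sin β₂, U₂₂ = e^{i(β₁+β₃)}·cos β₂. (This is the existence and uniqueness of the right-hand-side parameters in the Euler equation (E2) of the LOpp-calculus.) -/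
/-!
A unitary `U = !![a, b; c, d]` satisfies `adjugate U = det U • star U`, so
`U = !![a, b; -(e^{iδ} b̄), e^{iδ} ā]` with `δ = arg (det U)` and `‖a‖² + ‖b‖² = 1`.
Taking `β₂ = arccos ‖a‖`, the polar forms of `a`, `b` and `e^{iδ}` give the angles `β₀`, `β₁`, `β₃`.
When `sin β₂ = 0` (resp. `cos β₂ = 0`) only `β₁ + β₃` (resp. `β₀ + β₁`) is visible, so `β₁` can be
absorbed; reducing modulo `2π` puts the angles in `[0, 2π)`.
For uniqueness, `cos β₂ = ‖U 0 0‖` fixes `β₂`, and the entries that do not vanish fix the numbers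
`e^{iβⱼ}`, which determine angles in `[0, 2π)`.
-/

open Complex Real

noncomputable def E2rhs (β₀ β₁ β₂ β₃ : ℝ) : Matrix (Fin 2) (Fin 2) ℂ :=
  !![Complex.exp (Complex.I * β₀) * Real.cos β₂,
     Complex.I * Complex.exp (Complex.I * (β₀ + β₁)) * Real.sin β₂;
     Complex.I * Complex.exp (Complex.I * β₃) * Real.sin β₂,
     Complex.exp (Complex.I * (β₁ + β₃)) * Real.cos β₂]

lemma eq_of_cexp_I_mul_eq {θ φ : ℝ} (hθ : θ ∈ Set.Ico 0 (2 * π)) (hφ : φ ∈ Set.Ico 0 (2 * π))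
    (h : cexp (I * θ) = cexp (I * φ)) : θ = φ :=
  Circle.exp_injOn_Ico (by simp) hθ hφ (Circle.ext (by simpa [Circle.coe_exp, mul_comm] using h))

lemma cexp_I_mul_toIcoMod (θ : ℝ) : cexp (I * toIcoMod two_pi_pos 0 θ) = cexp (I * θ) :=
  exp_eq_exp_iff_exists_int.2 ⟨-toIcoDiv two_pi_pos 0 θ, by push_cast [toIcoMod]; ring⟩

lemma Complex.star_eq_norm_mul_exp_neg_arg_mul_I (z : ℂ) : star z = ‖z‖ * cexp (-(arg z * I)) := by
  calc star z = star (‖z‖ * cexp (arg z * I)) := by rw [norm_mul_exp_arg_mul_I]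
    _ = _ := by simp only [star_mul', Complex.star_def, ← exp_conj, map_mul, conj_ofReal, conj_I, mul_neg]

lemma Real.eq_zero_or_eq_pi_div_two_of_cos_eq_zero_or_sin_eq_zero {x : ℝ}
    (hx : x ∈ Set.Icc 0 (π / 2)) (h : Real.cos x = 0 ∨ Real.sin x = 0) : x = 0 ∨ x = π / 2 := by
  rcases h with hc | hs
  · refine .inr (by_contra fun hne ↦ ?_)
    have := cos_pos_of_mem_Ioo ⟨by linarith [hx.1, pi_pos], lt_of_le_of_ne hx.2 hne⟩
    linarith
  · exact .inl ((sin_eq_zero_iff_of_lt_of_lt (by linarith [hx.1, pi_pos])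
      (by linarith [hx.2, pi_pos])).1 hs)

lemma Matrix.adjugate_eq_det_smul_star {n α : Type*} [Fintype n] [DecidableEq n] [CommRing α]
    [StarRing α] {A : Matrix n n α} (hA : A ∈ Matrix.unitaryGroup n α) :
    A.adjugate = A.det • star A := by
  calc A.adjugate = A.adjugate * (A * star A) := by rw [Matrix.mem_unitaryGroup_iff.1 hA, mul_one]
    _ = A.det • star A := by rw [← mul_assoc, Matrix.adjugate_mul, smul_one_mul]

lemma Matrix.eq_of_mem_unitaryGroup_fin_two {α : Type*} [CommRing α] [StarRing α]
    {A : Matrix (Fin 2) (Fin 2) α} (hA : A ∈ Matrix.unitaryGroup (Fin 2) α) :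
    A = !![A 0 0, A 0 1; -(A.det * star (A 0 1)), A.det * star (A 0 0)] := by
  have h := Matrix.adjugate_eq_det_smul_star hA
  rw [Matrix.adjugate_fin_two] at h
  have h10 := congrFun₂ h 1 0
  have h00 := congrFun₂ h 0 0
  simp only [of_apply, cons_val', cons_val_zero, cons_val_fin_one, cons_val_one, smul_apply,
    star_apply, smul_eq_mul] at h10 h00
  rw [← h00, ← h10, neg_neg]
  exact Matrix.eta_fin_two A

lemma Matrix.norm_sq_add_norm_sq_of_mem_unitaryGroup_fin_two {U : Matrix (Fin 2) (Fin 2) ℂ}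
    (hU : U ∈ Matrix.unitaryGroup (Fin 2) ℂ) : ‖U 0 0‖ ^ 2 + ‖U 0 1‖ ^ 2 = 1 := by
  have h := congrFun₂ (Matrix.mem_unitaryGroup_iff.1 hU) 0 0
  simp only [Matrix.mul_apply, Fin.sum_univ_two, Matrix.star_apply, Complex.star_def, mul_conj,
    Matrix.one_apply_eq] at h
  rw [Complex.sq_norm, Complex.sq_norm]
  exact_mod_cast h

lemma E2rhs_eq_polar (α θ δ β₂ : ℝ) :
    E2rhs α (θ - π / 2 - α) β₂ (δ - θ + π / 2) =
      !![Real.cos β₂ * cexp (α * I), Real.sin β₂ * cexp (θ * I);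
        -(cexp (δ * I) * (Real.sin β₂ * cexp (-(θ * I)))),
        cexp (δ * I) * (Real.cos β₂ * cexp (-(α * I)))] := by
  ext i j
  fin_cases i <;> fin_cases j <;>
    simp only [E2rhs, mul_comm I, Fin.zero_eta, Fin.mk_one, Matrix.of_apply, Matrix.cons_val',
      Matrix.cons_val_zero, Matrix.cons_val_one, Matrix.cons_val_fin_one, ofReal_add, ofReal_sub,
      ofReal_div, ofReal_ofNat, add_mul, sub_mul, Complex.exp_add, Complex.exp_sub, exp_pi_div_two_mul_I,
      Complex.exp_neg] <;>
    field_simp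
  linear_combination (Real.sin β₂ : ℂ) * I_sq

lemma exists_E2rhs_eq_of_mem_unitaryGroup {U : Matrix (Fin 2) (Fin 2) ℂ}
    (hU : U ∈ Matrix.unitaryGroup (Fin 2) ℂ) :
    ∃ β₀ β₁ β₂ β₃ : ℝ, β₂ ∈ Set.Icc 0 (π / 2) ∧ U = E2rhs β₀ β₁ β₂ β₃ := by
  set a := U 0 0
  set b := U 0 1
  have hab := Matrix.norm_sq_add_norm_sq_of_mem_unitaryGroup_fin_two hU
  have hcos : Real.cos (arccos ‖a‖) = ‖a‖ :=
    cos_arccos (by linarith [norm_nonneg a]) (by nlinarith [norm_nonneg b])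
  have hsin : Real.sin (arccos ‖a‖) = ‖b‖ := by
    rw [sin_arccos, show 1 - ‖a‖ ^ 2 = ‖b‖ ^ 2 by linarith, Real.sqrt_sq (norm_nonneg b)]
  have hdet : cexp (arg U.det * I) = U.det := by
    have h1 : U.det ∈ unitary ℂ := Matrix.det_of_mem_unitary hU
    have h := norm_mul_exp_arg_mul_I U.det
    rwa [CStarRing.norm_of_mem_unitary h1, ofReal_one, one_mul] at h
  have hβ₂ : arccos ‖a‖ ∈ Set.Icc 0 (π / 2) :=
    ⟨arccos_nonneg _, arccos_le_pi_div_two.2 (norm_nonneg _)⟩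
  refine ⟨arg a, arg b - π / 2 - arg a, arccos ‖a‖, arg U.det - arg b + π / 2, hβ₂, ?_⟩
  rw [E2rhs_eq_polar, hcos, hsin, hdet, norm_mul_exp_arg_mul_I, norm_mul_exp_arg_mul_I,
    ← Complex.star_eq_norm_mul_exp_neg_arg_mul_I, ← Complex.star_eq_norm_mul_exp_neg_arg_mul_I]
  exact Matrix.eq_of_mem_unitaryGroup_fin_two hU

lemma E2rhs_zero (β₀ β₁ β₃ : ℝ) : E2rhs β₀ β₁ 0 β₃ = E2rhs β₀ 0 0 (β₁ + β₃) := by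
  simp [E2rhs]

lemma E2rhs_pi_div_two (β₀ β₁ β₃ : ℝ) :
    E2rhs β₀ β₁ (π / 2) β₃ = E2rhs (β₀ + β₁) 0 (π / 2) β₃ := by
  simp [E2rhs]

lemma E2rhs_congr {β₀ β₁ β₃ γ₀ γ₁ γ₃ : ℝ} (β₂ : ℝ) (h₀ : cexp (I * β₀) = cexp (I * γ₀))
    (h₁ : cexp (I * β₁) = cexp (I * γ₁)) (h₃ : cexp (I * β₃) = cexp (I * γ₃)) :
    E2rhs β₀ β₁ β₂ β₃ = E2rhs γ₀ γ₁ β₂ γ₃ := by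
  simp only [E2rhs, mul_add, Complex.exp_add, h₀, h₁, h₃]

lemma exists_E2rhs_eq_of_degenerate (β₀ β₁ β₂ β₃ : ℝ) :
    ∃ γ₀ γ₁ γ₃ : ℝ, (β₂ = 0 ∨ β₂ = π / 2 → γ₁ = 0) ∧ E2rhs β₀ β₁ β₂ β₃ = E2rhs γ₀ γ₁ β₂ γ₃ := by
  by_cases h₀ : β₂ = 0
  · subst h₀
    exact ⟨β₀, 0, β₁ + β₃, fun _ ↦ rfl, E2rhs_zero β₀ β₁ β₃⟩
  by_cases h₁ : β₂ = π / 2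
  · subst h₁
    exact ⟨β₀ + β₁, 0, β₃, fun _ ↦ rfl, E2rhs_pi_div_two β₀ β₁ β₃⟩
  exact ⟨β₀, β₁, β₃, fun h ↦ (h.elim h₀ h₁).elim, rfl⟩

lemma exists_E2rhs_eq_mem_Ico (β₀ β₁ β₂ β₃ : ℝ) :
    ∃ γ₀ γ₁ γ₃ : ℝ, γ₀ ∈ Set.Ico 0 (2 * π) ∧ γ₁ ∈ Set.Ico 0 (2 * π) ∧ γ₃ ∈ Set.Ico 0 (2 * π) ∧
      (β₁ = 0 → γ₁ = 0) ∧ E2rhs β₀ β₁ β₂ β₃ = E2rhs γ₀ γ₁ β₂ γ₃ :=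
  ⟨toIcoMod two_pi_pos 0 β₀, toIcoMod two_pi_pos 0 β₁, toIcoMod two_pi_pos 0 β₃,
    toIcoMod_mem_Ico' _ _, toIcoMod_mem_Ico' _ _, toIcoMod_mem_Ico' _ _,
    fun h ↦ by rw [h, toIcoMod_apply_left],
    E2rhs_congr β₂ (cexp_I_mul_toIcoMod β₀).symm (cexp_I_mul_toIcoMod β₁).symm
      (cexp_I_mul_toIcoMod β₃).symm⟩

lemma exists_E2rhs_eq_normalized (β₀ β₁ β₂ β₃ : ℝ) :
    ∃ γ₀ γ₁ γ₃ : ℝ, γ₀ ∈ Set.Ico 0 (2 * π) ∧ γ₁ ∈ Set.Ico 0 (2 * π) ∧ γ₃ ∈ Set.Ico 0 (2 * π) ∧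
      (β₂ = 0 ∨ β₂ = π / 2 → γ₁ = 0) ∧ E2rhs β₀ β₁ β₂ β₃ = E2rhs γ₀ γ₁ β₂ γ₃ := by
  obtain ⟨β₀', β₁', β₃', hβ₁', hβ'⟩ := exists_E2rhs_eq_of_degenerate β₀ β₁ β₂ β₃
  obtain ⟨γ₀, γ₁, γ₃, hγ₀, hγ₁, hγ₃, hγ₁', hγ⟩ := exists_E2rhs_eq_mem_Ico β₀' β₁' β₂ β₃'
  exact ⟨γ₀, γ₁, γ₃, hγ₀, hγ₁, hγ₃, fun h ↦ hγ₁' (hβ₁' h), hβ'.trans hγ⟩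

lemma norm_E2rhs_zero_zero {β₂ : ℝ} (β₀ β₁ β₃ : ℝ) (h : 0 ≤ Real.cos β₂) :
    ‖E2rhs β₀ β₁ β₂ β₃ 0 0‖ = Real.cos β₂ := by
  simp [E2rhs, -ofReal_cos, h]

lemma angles_eq_of_E2rhs_eq {β₀ β₁ β₂ β₃ γ₀ γ₁ γ₃ : ℝ} (hβ₀ : β₀ ∈ Set.Ico 0 (2 * π))
    (hβ₁ : β₁ ∈ Set.Ico 0 (2 * π)) (hβ₃ : β₃ ∈ Set.Ico 0 (2 * π))
    (hγ₀ : γ₀ ∈ Set.Ico 0 (2 * π)) (hγ₁ : γ₁ ∈ Set.Ico 0 (2 * π)) (hγ₃ : γ₃ ∈ Set.Ico 0 (2 * π))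
    (hβ : Real.cos β₂ = 0 ∨ Real.sin β₂ = 0 → β₁ = 0)
    (hγ : Real.cos β₂ = 0 ∨ Real.sin β₂ = 0 → γ₁ = 0)
    (h : E2rhs β₀ β₁ β₂ β₃ = E2rhs γ₀ γ₁ β₂ γ₃) : β₀ = γ₀ ∧ β₁ = γ₁ ∧ β₃ = γ₃ := by
  have h00 := congrFun₂ h 0 0
  have h01 := congrFun₂ h 0 1
  have h10 := congrFun₂ h 1 0
  have h11 := congrFun₂ h 1 1
  simp only [E2rhs, Matrix.of_apply, Matrix.cons_val', Matrix.cons_val_zero, Matrix.cons_val_one,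
    Matrix.cons_val_fin_one, mul_eq_mul_right_iff, mul_eq_mul_left_iff, ofReal_eq_zero, I_ne_zero,
    or_false] at h00 h01 h10 h11
  by_cases hdeg : Real.cos β₂ = 0 ∨ Real.sin β₂ = 0
  · obtain rfl := hβ hdeg
    obtain rfl := hγ hdeg
    simp only [ofReal_zero, add_zero, zero_add] at h01 h11
    rcases hdeg with hc | hs
    · have hs : Real.sin β₂ ≠ 0 := fun hs ↦ by simpa [hc, hs] using Real.sin_sq_add_cos_sq β₂
      exact ⟨eq_of_cexp_I_mul_eq hβ₀ hγ₀ (h01.resolve_right hs), rfl,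
        eq_of_cexp_I_mul_eq hβ₃ hγ₃ (h10.resolve_right hs)⟩
    · have hc : Real.cos β₂ ≠ 0 := fun hc ↦ by simpa [hc, hs] using Real.sin_sq_add_cos_sq β₂
      exact ⟨eq_of_cexp_I_mul_eq hβ₀ hγ₀ (h00.resolve_right hc), rfl,
        eq_of_cexp_I_mul_eq hβ₃ hγ₃ (h11.resolve_right hc)⟩
  · rw [not_or] at hdeg
    have e₀ := h00.resolve_right hdeg.1
    have e₀₁ := h01.resolve_right hdeg.2
    rw [mul_add, mul_add, Complex.exp_add, Complex.exp_add, e₀] at e₀₁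
    exact ⟨eq_of_cexp_I_mul_eq hβ₀ hγ₀ e₀,
      eq_of_cexp_I_mul_eq hβ₁ hγ₁ (mul_left_cancel₀ (Complex.exp_ne_zero _) e₀₁),
      eq_of_cexp_I_mul_eq hβ₃ hγ₃ (h10.resolve_right hdeg.2)⟩

lemma eq_of_E2rhs_eq {β₀ β₁ β₂ β₃ γ₀ γ₁ γ₂ γ₃ : ℝ}
    (hβ₀ : β₀ ∈ Set.Ico 0 (2 * π)) (hβ₁ : β₁ ∈ Set.Ico 0 (2 * π))
    (hβ₂ : β₂ ∈ Set.Icc 0 (π / 2)) (hβ₃ : β₃ ∈ Set.Ico 0 (2 * π))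
    (hγ₀ : γ₀ ∈ Set.Ico 0 (2 * π)) (hγ₁ : γ₁ ∈ Set.Ico 0 (2 * π))
    (hγ₂ : γ₂ ∈ Set.Icc 0 (π / 2)) (hγ₃ : γ₃ ∈ Set.Ico 0 (2 * π))
    (hβ : β₂ = 0 ∨ β₂ = π / 2 → β₁ = 0) (hγ : γ₂ = 0 ∨ γ₂ = π / 2 → γ₁ = 0)
    (h : E2rhs β₀ β₁ β₂ β₃ = E2rhs γ₀ γ₁ γ₂ γ₃) :
    β₀ = γ₀ ∧ β₁ = γ₁ ∧ β₂ = γ₂ ∧ β₃ = γ₃ := by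
  have hIcc : Set.Icc 0 (π / 2) ⊆ Set.Icc (-(π / 2)) (π / 2) :=
    Set.Icc_subset_Icc_left (by linarith [pi_pos])
  have hIcc' : Set.Icc 0 (π / 2) ⊆ Set.Icc 0 π := Set.Icc_subset_Icc_right (by linarith [pi_pos])
  obtain rfl : β₂ = γ₂ := injOn_cos (hIcc' hβ₂) (hIcc' hγ₂) <| by
    rw [← norm_E2rhs_zero_zero β₀ β₁ β₃ (cos_nonneg_of_mem_Icc (hIcc hβ₂)), h,
      norm_E2rhs_zero_zero γ₀ γ₁ γ₃ (cos_nonneg_of_mem_Icc (hIcc hγ₂))]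
  have hdeg := Real.eq_zero_or_eq_pi_div_two_of_cos_eq_zero_or_sin_eq_zero hβ₂
  obtain ⟨h₀, h₁, h₃⟩ := angles_eq_of_E2rhs_eq hβ₀ hβ₁ hβ₃ hγ₀ hγ₁ hγ₃ (hβ ∘ hdeg) (hγ ∘ hdeg) h
  exact ⟨h₀, h₁, rfl, h₃⟩

theorem E2_rhs_exists_unique (U : Matrix.unitaryGroup (Fin 2) ℂ) :
    ∃! β : ℝ × ℝ × ℝ × ℝ,
      β.1 ∈ Set.Ico 0 (2 * π) ∧
      β.2.1 ∈ Set.Ico 0 (2 * π) ∧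
      β.2.2.1 ∈ Set.Icc 0 (π / 2) ∧
      β.2.2.2 ∈ Set.Ico 0 (2 * π) ∧
      (β.2.2.1 = 0 ∨ β.2.2.1 = π / 2 → β.2.1 = 0) ∧
      (U : Matrix (Fin 2) (Fin 2) ℂ) = E2rhs β.1 β.2.1 β.2.2.1 β.2.2.2 := by
  obtain ⟨β₀, β₁, β₂, β₃, hβ₂, hU⟩ := exists_E2rhs_eq_of_mem_unitaryGroup U.2
  obtain ⟨γ₀, γ₁, γ₃, hγ₀, hγ₁, hγ₃, hγ, hβγ⟩ := exists_E2rhs_eq_normalized β₀ β₁ β₂ β₃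
  refine ⟨(γ₀, γ₁, β₂, γ₃), ⟨hγ₀, hγ₁, hβ₂, hγ₃, hγ, hU.trans hβγ⟩, ?_⟩
  rintro ⟨δ₀, δ₁, δ₂, δ₃⟩ ⟨hδ₀, hδ₁, hδ₂, hδ₃, hδ, hδU⟩
  obtain ⟨rfl, rfl, rfl, rfl⟩ :=
    eq_of_E2rhs_eq hδ₀ hδ₁ hδ₂ hδ₃ hγ₀ hγ₁ hβ₂ hγ₃ hδ hγ (hδU.symm.trans (hU.trans hβγ))
  rfl
end

section
/- For all real numbers γ₁, γ₂, γ₃ there exist real numbers δ₁, δ₂, δ₃ such that B₁₂(γ₁) · B₂₃(γ₂) · B₁₂(γ₃) = B₂₃(δ₁) · B₁₂(δ₂) · B₂₃(δ₃). (This is the soundness of the Euler equation (E3) of the LOpp-calculus: any product of three alternating beam splitters on three wires starting on the top pair of wires equals a product of three alternating beam splitters starting on the bottom pair.) -/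
open Complex Real

noncomputable def B12 (θ : ℝ) : Matrix (Fin 3) (Fin 3) ℂ :=
  !![(Real.cos θ : ℂ), Complex.I * Real.sin θ, 0;
     Complex.I * Real.sin θ, (Real.cos θ : ℂ), 0;
     0, 0, 1]

noncomputable def B23 (θ : ℝ) : Matrix (Fin 3) (Fin 3) ℂ :=
  !![1, 0, 0;
     0, (Real.cos θ : ℂ), Complex.I * Real.sin θ;
     0, Complex.I * Real.sin θ, (Real.cos θ : ℂ)]

lemma prod121 (a b c : ℝ) : B12 a * B23 b * B12 c =
    !![((Real.cos a * Real.cos c - Real.sin a * Real.cos b * Real.sin c : ℝ) : ℂ),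
       Complex.I * ((Real.cos a * Real.sin c + Real.sin a * Real.cos b * Real.cos c : ℝ) : ℂ),
       -((Real.sin a * Real.sin b : ℝ) : ℂ);
       Complex.I * ((Real.sin a * Real.cos c + Real.cos a * Real.cos b * Real.sin c : ℝ) : ℂ),
       ((Real.cos a * Real.cos b * Real.cos c - Real.sin a * Real.sin c : ℝ) : ℂ),
       Complex.I * ((Real.cos a * Real.sin b : ℝ) : ℂ);
       -((Real.sin b * Real.sin c : ℝ) : ℂ),
       Complex.I * ((Real.sin b * Real.cos c : ℝ) : ℂ),
       ((Real.cos b : ℝ) : ℂ)] := by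
  simp only [B12, B23, Matrix.mul_fin_three]
  push_cast
  ext i j
  fin_cases i <;> fin_cases j <;> simp <;> ring_nf <;> simp [Complex.I_sq] <;> ring

lemma prod232 (d e f : ℝ) : B23 d * B12 e * B23 f =
    !![((Real.cos e : ℝ) : ℂ),
       Complex.I * ((Real.sin e * Real.cos f : ℝ) : ℂ),
       -((Real.sin e * Real.sin f : ℝ) : ℂ);
       Complex.I * ((Real.cos d * Real.sin e : ℝ) : ℂ),
       ((Real.cos d * Real.cos e * Real.cos f - Real.sin d * Real.sin f : ℝ) : ℂ),
       Complex.I * ((Real.cos d * Real.cos e * Real.sin f + Real.sin d * Real.cos f : ℝ) : ℂ);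
       -((Real.sin d * Real.sin e : ℝ) : ℂ),
       Complex.I * ((Real.sin d * Real.cos e * Real.cos f + Real.cos d * Real.sin f : ℝ) : ℂ),
       ((Real.cos d * Real.cos f - Real.sin d * Real.cos e * Real.sin f : ℝ) : ℂ)] := by
  simp only [B12, B23, Matrix.mul_fin_three]
  push_cast
  ext i j
  fin_cases i <;> fin_cases j <;> simp <;> ring_nf <;> simp [Complex.I_sq] <;> ring

lemma key (a b c d e f : ℝ)
    (E11 : Real.cos e = Real.cos a * Real.cos c - Real.sin a * Real.cos b * Real.sin c)
    (E12 : Real.sin e * Real.cos f = Real.cos a * Real.sin c + Real.sin a * Real.cos b * Real.cos c)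
    (E13 : Real.sin e * Real.sin f = Real.sin a * Real.sin b)
    (E21 : Real.cos d * Real.sin e = Real.sin a * Real.cos c + Real.cos a * Real.cos b * Real.sin c)
    (E31 : Real.sin d * Real.sin e = Real.sin b * Real.sin c)
    (E22 : Real.cos d * Real.cos e * Real.cos f - Real.sin d * Real.sin f
        = Real.cos a * Real.cos b * Real.cos c - Real.sin a * Real.sin c)
    (E23 : Real.cos d * Real.cos e * Real.sin f + Real.sin d * Real.cos f = Real.cos a * Real.sin b)
    (E32 : Real.sin d * Real.cos e * Real.cos f + Real.cos d * Real.sin f = Real.sin b * Real.cos c)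
    (E33 : Real.cos d * Real.cos f - Real.sin d * Real.cos e * Real.sin f = Real.cos b) :
    B12 a * B23 b * B12 c = B23 d * B12 e * B23 f := by
  rw [prod121, prod232, E22, E23, E32, E33, E12, E13, E21, E31, E11]

lemma circle_param (x y : ℝ) (h : x^2 + y^2 = 1) :
    ∃ θ : ℝ, Real.cos θ = x ∧ Real.sin θ = y := by
  rcases le_or_gt 0 y with hy | hy
  · refine ⟨Real.arccos x, Real.cos_arccos (by nlinarith [sq_nonneg y]) (by nlinarith [sq_nonneg y]), ?_⟩
    rw [Real.sin_arccos, show 1 - x^2 = y^2 by linarith, Real.sqrt_sq hy]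
  · refine ⟨-Real.arccos x, by
      rw [Real.cos_neg]
      exact Real.cos_arccos (by nlinarith [sq_nonneg y]) (by nlinarith [sq_nonneg y]), ?_⟩
    rw [Real.sin_neg, Real.sin_arccos, show 1 - x^2 = y^2 by linarith, Real.sqrt_sq_eq_abs,
      abs_of_neg hy, neg_neg]

set_option maxHeartbeats 2000000 in
theorem E3_soundness (γ₁ γ₂ γ₃ : ℝ) :
    ∃ δ₁ δ₂ δ₃ : ℝ, B12 γ₁ * B23 γ₂ * B12 γ₃ = B23 δ₁ * B12 δ₂ * B23 δ₃ := by
  have h1 : Real.sin γ₁ ^ 2 + Real.cos γ₁ ^ 2 = 1 := Real.sin_sq_add_cos_sq γ₁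
  have h2 : Real.sin γ₂ ^ 2 + Real.cos γ₂ ^ 2 = 1 := Real.sin_sq_add_cos_sq γ₂
  have h3 : Real.sin γ₃ ^ 2 + Real.cos γ₃ ^ 2 = 1 := Real.sin_sq_add_cos_sq γ₃
  have hn1 : (Real.cos γ₁*Real.cos γ₃ - Real.sin γ₁*Real.cos γ₂*Real.sin γ₃)^2 + (Real.sin γ₁*Real.cos γ₃ + Real.cos γ₁*Real.cos γ₂*Real.sin γ₃)^2 + (Real.sin γ₂*Real.sin γ₃)^2 = 1 := by
    linear_combination (Real.cos γ₃^2 + Real.cos γ₂^2*Real.sin γ₃^2) * h1 + Real.sin γ₃^2 * h2 + h3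
  have hn2 : (Real.cos γ₁*Real.cos γ₃ - Real.sin γ₁*Real.cos γ₂*Real.sin γ₃)^2 + (Real.cos γ₁*Real.sin γ₃ + Real.sin γ₁*Real.cos γ₂*Real.cos γ₃)^2 + (Real.sin γ₁*Real.sin γ₂)^2 = 1 := by
    linear_combination (Real.cos γ₂^2*Real.cos γ₃^2 + Real.cos γ₂^2*Real.sin γ₃^2 + Real.sin γ₂^2) * h1 + (1 - Real.cos γ₁^2) * h2 + (Real.cos γ₂^2 + Real.cos γ₁^2 - Real.cos γ₁^2*Real.cos γ₂^2) * h3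
  rcases lt_or_ge ((Real.cos γ₁*Real.cos γ₃ - Real.sin γ₁*Real.cos γ₂*Real.sin γ₃)^2) 1 with hlt | hge
  · -- main case
    set se := Real.sqrt (1 - (Real.cos γ₁*Real.cos γ₃ - Real.sin γ₁*Real.cos γ₂*Real.sin γ₃)^2) with hsedef
    have hse0 : 0 < se := Real.sqrt_pos.2 (by linarith)
    have hse2 : se^2 = 1 - (Real.cos γ₁*Real.cos γ₃ - Real.sin γ₁*Real.cos γ₂*Real.sin γ₃)^2 := Real.sq_sqrt (by linarith)
    obtain ⟨d, hd1, hd2⟩ := circle_param ((Real.sin γ₁*Real.cos γ₃ + Real.cos γ₁*Real.cos γ₂*Real.sin γ₃)/se) ((Real.sin γ₂*Real.sin γ₃)/se) (by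
      field_simp
      linear_combination hn1 - hse2)
    obtain ⟨f, hf1, hf2⟩ := circle_param ((Real.cos γ₁*Real.sin γ₃ + Real.sin γ₁*Real.cos γ₂*Real.cos γ₃)/se) ((Real.sin γ₁*Real.sin γ₂)/se) (by
      field_simp
      linear_combination hn2 - hse2)
    have he1 : Real.cos (Real.arccos (Real.cos γ₁*Real.cos γ₃ - Real.sin γ₁*Real.cos γ₂*Real.sin γ₃)) = (Real.cos γ₁*Real.cos γ₃ - Real.sin γ₁*Real.cos γ₂*Real.sin γ₃) :=
      Real.cos_arccos (by nlinarith) (by nlinarith)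
    have he2 : Real.sin (Real.arccos (Real.cos γ₁*Real.cos γ₃ - Real.sin γ₁*Real.cos γ₂*Real.sin γ₃)) = se := by
      rw [Real.sin_arccos]
    have hID22 : (Real.sin γ₁*Real.cos γ₃ + Real.cos γ₁*Real.cos γ₂*Real.sin γ₃)*(Real.cos γ₁*Real.cos γ₃ - Real.sin γ₁*Real.cos γ₂*Real.sin γ₃)*(Real.cos γ₁*Real.sin γ₃ + Real.sin γ₁*Real.cos γ₂*Real.cos γ₃) - (Real.sin γ₂*Real.sin γ₃)*(Real.sin γ₁*Real.sin γ₂) = (1 - (Real.cos γ₁*Real.cos γ₃ - Real.sin γ₁*Real.cos γ₂*Real.sin γ₃)^2) * (Real.cos γ₁*Real.cos γ₂*Real.cos γ₃ - Real.sin γ₁*Real.sin γ₃) := by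
      linear_combination (Real.cos γ₁*Real.cos γ₂*Real.cos γ₃^3 + Real.cos γ₁*Real.cos γ₂*Real.sin γ₃^2*Real.cos γ₃ - Real.sin γ₁*Real.cos γ₂^2*Real.sin γ₃*Real.cos γ₃^2 - Real.sin γ₁*Real.cos γ₂^2*Real.sin γ₃^3) * h1 + (-Real.sin γ₁*Real.sin γ₃) * h2 + (Real.cos γ₁*Real.cos γ₂*Real.cos γ₃ - Real.sin γ₁*Real.cos γ₂^2*Real.sin γ₃) * h3
    have hID23 : (Real.sin γ₁*Real.cos γ₃ + Real.cos γ₁*Real.cos γ₂*Real.sin γ₃)*(Real.cos γ₁*Real.cos γ₃ - Real.sin γ₁*Real.cos γ₂*Real.sin γ₃)*(Real.sin γ₁*Real.sin γ₂) + (Real.sin γ₂*Real.sin γ₃)*(Real.cos γ₁*Real.sin γ₃ + Real.sin γ₁*Real.cos γ₂*Real.cos γ₃) = (1 - (Real.cos γ₁*Real.cos γ₃ - Real.sin γ₁*Real.cos γ₂*Real.sin γ₃)^2) * (Real.cos γ₁*Real.sin γ₂) := by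
      linear_combination (Real.cos γ₁*Real.sin γ₂*Real.cos γ₃^2 - Real.sin γ₁*Real.sin γ₂*Real.cos γ₂*Real.sin γ₃*Real.cos γ₃) * h1 + (Real.cos γ₁*Real.sin γ₂) * h3
    have hID32 : (Real.sin γ₂*Real.sin γ₃)*(Real.cos γ₁*Real.cos γ₃ - Real.sin γ₁*Real.cos γ₂*Real.sin γ₃)*(Real.cos γ₁*Real.sin γ₃ + Real.sin γ₁*Real.cos γ₂*Real.cos γ₃) + (Real.sin γ₁*Real.cos γ₃ + Real.cos γ₁*Real.cos γ₂*Real.sin γ₃)*(Real.sin γ₁*Real.sin γ₂) = (1 - (Real.cos γ₁*Real.cos γ₃ - Real.sin γ₁*Real.cos γ₂*Real.sin γ₃)^2) * (Real.sin γ₂*Real.cos γ₃) := by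
      linear_combination (Real.sin γ₂*Real.cos γ₃) * h1 + (Real.cos γ₁^2*Real.sin γ₂*Real.cos γ₃ - Real.sin γ₁*Real.cos γ₁*Real.sin γ₂*Real.cos γ₂*Real.sin γ₃) * h3
    have hID33 : (Real.sin γ₁*Real.cos γ₃ + Real.cos γ₁*Real.cos γ₂*Real.sin γ₃)*(Real.cos γ₁*Real.sin γ₃ + Real.sin γ₁*Real.cos γ₂*Real.cos γ₃) - (Real.sin γ₂*Real.sin γ₃)*(Real.cos γ₁*Real.cos γ₃ - Real.sin γ₁*Real.cos γ₂*Real.sin γ₃)*(Real.sin γ₁*Real.sin γ₂) = (1 - (Real.cos γ₁*Real.cos γ₃ - Real.sin γ₁*Real.cos γ₂*Real.sin γ₃)^2) * Real.cos γ₂ := by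
      linear_combination (Real.cos γ₂*Real.cos γ₃^2 + Real.cos γ₂^3*Real.sin γ₃^2 + Real.sin γ₂^2*Real.cos γ₂*Real.sin γ₃^2) * h1 + (Real.cos γ₂*Real.sin γ₃^2 - Real.cos γ₁^2*Real.cos γ₂*Real.sin γ₃^2 - Real.sin γ₁*Real.cos γ₁*Real.sin γ₃*Real.cos γ₃) * h2 + Real.cos γ₂ * h3
    refine ⟨d, Real.arccos (Real.cos γ₁*Real.cos γ₃ - Real.sin γ₁*Real.cos γ₂*Real.sin γ₃), f, key γ₁ γ₂ γ₃ d (Real.arccos (Real.cos γ₁*Real.cos γ₃ - Real.sin γ₁*Real.cos γ₂*Real.sin γ₃)) f ?_ ?_ ?_ ?_ ?_ ?_ ?_ ?_ ?_⟩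
    · rw [he1]
    · rw [he2, hf1]; field_simp
    · rw [he2, hf2]; field_simp
    · rw [hd1, he2]; field_simp
    · rw [hd2, he2]; field_simp
    · rw [hd1, hd2, he1, hf1, hf2]
      field_simp
      linear_combination hID22 - (Real.cos γ₁*Real.cos γ₂*Real.cos γ₃ - Real.sin γ₁*Real.sin γ₃) * hse2
    · rw [hd1, hd2, he1, hf1, hf2]
      field_simp
      linear_combination hID23 - (Real.cos γ₁*Real.sin γ₂) * hse2
    · rw [hd1, hd2, he1, hf1, hf2]
      field_simp
      linear_combination hID32 - (Real.sin γ₂*Real.cos γ₃) * hse2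
    · rw [hd1, hd2, he1, hf1, hf2]
      field_simp
      linear_combination hID33 - Real.cos γ₂ * hse2
  · -- degenerate case
    have hKsq : (Real.cos γ₁*Real.cos γ₃ - Real.sin γ₁*Real.cos γ₂*Real.sin γ₃)^2 = 1 := le_antisymm (by linarith [sq_nonneg (Real.sin γ₁*Real.cos γ₃ + Real.cos γ₁*Real.cos γ₂*Real.sin γ₃), sq_nonneg (Real.sin γ₂*Real.sin γ₃)]) hge
    have hP : (Real.sin γ₁*Real.cos γ₃ + Real.cos γ₁*Real.cos γ₂*Real.sin γ₃) = 0 := by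
      have : (Real.sin γ₁*Real.cos γ₃ + Real.cos γ₁*Real.cos γ₂*Real.sin γ₃)^2 = 0 := by linarith [sq_nonneg (Real.sin γ₁*Real.cos γ₃ + Real.cos γ₁*Real.cos γ₂*Real.sin γ₃), sq_nonneg (Real.sin γ₂*Real.sin γ₃)]
      exact pow_eq_zero_iff two_ne_zero |>.1 this
    have hQ : (Real.sin γ₂*Real.sin γ₃) = 0 := by
      have : (Real.sin γ₂*Real.sin γ₃)^2 = 0 := by linarith [sq_nonneg (Real.sin γ₁*Real.cos γ₃ + Real.cos γ₁*Real.cos γ₂*Real.sin γ₃), sq_nonneg (Real.sin γ₂*Real.sin γ₃)]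
      exact pow_eq_zero_iff two_ne_zero |>.1 this
    have hR : (Real.cos γ₁*Real.sin γ₃ + Real.sin γ₁*Real.cos γ₂*Real.cos γ₃) = 0 := by
      have : (Real.cos γ₁*Real.sin γ₃ + Real.sin γ₁*Real.cos γ₂*Real.cos γ₃)^2 = 0 := by linarith [sq_nonneg (Real.cos γ₁*Real.sin γ₃ + Real.sin γ₁*Real.cos γ₂*Real.cos γ₃), sq_nonneg (Real.sin γ₁*Real.sin γ₂)]
      exact pow_eq_zero_iff two_ne_zero |>.1 this
    have hS : (Real.sin γ₁*Real.sin γ₂) = 0 := by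
      have : (Real.sin γ₁*Real.sin γ₂)^2 = 0 := by linarith [sq_nonneg (Real.cos γ₁*Real.sin γ₃ + Real.sin γ₁*Real.cos γ₂*Real.cos γ₃), sq_nonneg (Real.sin γ₁*Real.sin γ₂)]
      exact pow_eq_zero_iff two_ne_zero |>.1 this
    have hcirc : Real.cos γ₂^2 + (Real.cos γ₁*Real.sin γ₂)^2 = 1 := by
      linear_combination h2 - (Real.sin γ₁*Real.sin γ₂) * hS + Real.sin γ₂^2 * h1
    obtain ⟨t, ht1, ht2⟩ := circle_param (Real.cos γ₂) (Real.cos γ₁*Real.sin γ₂) hcirc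
    have hKcases : (Real.cos γ₁*Real.cos γ₃ - Real.sin γ₁*Real.cos γ₂*Real.sin γ₃) = 1 ∨ (Real.cos γ₁*Real.cos γ₃ - Real.sin γ₁*Real.cos γ₂*Real.sin γ₃) = -1 := by
      rcases mul_eq_zero.1 (show ((Real.cos γ₁*Real.cos γ₃ - Real.sin γ₁*Real.cos γ₂*Real.sin γ₃) - 1) * ((Real.cos γ₁*Real.cos γ₃ - Real.sin γ₁*Real.cos γ₂*Real.sin γ₃) + 1) = 0 by linear_combination hKsq) with h | h
      · left; linarith
      · right; linarith
    rcases hKcases with hK | hK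
    · have hX : (Real.cos γ₁*Real.cos γ₂*Real.cos γ₃ - Real.sin γ₁*Real.sin γ₃) = Real.cos γ₂ := by
        linear_combination Real.cos γ₂ * hK - (Real.sin γ₂*Real.sin γ₃) * hS + (Real.sin γ₁*Real.sin γ₃) * h2
      have hsbcc : Real.sin γ₂*Real.cos γ₃ = Real.cos γ₁*Real.sin γ₂ := by
        rcases eq_or_ne (Real.sin γ₂) 0 with hb | hb
        · rw [hb]; ring
        · have hsa0 : Real.sin γ₁ = 0 := by
            rcases mul_eq_zero.1 hS with h | h
            · exact h
            · exact absurd h hb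
          linear_combination (-Real.sin γ₂*Real.cos γ₃) * h1 + (Real.cos γ₁*Real.sin γ₂) * hK + (Real.cos γ₁*Real.sin γ₂*Real.cos γ₂*Real.sin γ₃ + Real.sin γ₁*Real.sin γ₂*Real.cos γ₃) * hsa0
      refine ⟨t, 0, 0, key γ₁ γ₂ γ₃ t 0 0 ?_ ?_ ?_ ?_ ?_ ?_ ?_ ?_ ?_⟩ <;>
        simp only [Real.cos_zero, Real.sin_zero, ht1, ht2]
      · linarith [hK]
      · linarith [hR]
      · linear_combination -hS
      · linear_combination -hP
      · linear_combination hQ.symm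
      · linear_combination hX.symm
      · linear_combination
      · linear_combination hsbcc.symm
      · linear_combination
    · have hX : (Real.cos γ₁*Real.cos γ₂*Real.cos γ₃ - Real.sin γ₁*Real.sin γ₃) = -Real.cos γ₂ := by
        linear_combination Real.cos γ₂ * hK - (Real.sin γ₂*Real.sin γ₃) * hS + (Real.sin γ₁*Real.sin γ₃) * h2
      have hsbcc : Real.sin γ₂*Real.cos γ₃ = -(Real.cos γ₁*Real.sin γ₂) := by
        rcases eq_or_ne (Real.sin γ₂) 0 with hb | hb
        · rw [hb]; ring
        · have hsa0 : Real.sin γ₁ = 0 := by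
            rcases mul_eq_zero.1 hS with h | h
            · exact h
            · exact absurd h hb
          linear_combination (-Real.sin γ₂*Real.cos γ₃) * h1 + (Real.cos γ₁*Real.sin γ₂) * hK + (Real.cos γ₁*Real.sin γ₂*Real.cos γ₂*Real.sin γ₃ + Real.sin γ₁*Real.sin γ₂*Real.cos γ₃) * hsa0
      refine ⟨t, Real.pi, 0, key γ₁ γ₂ γ₃ t Real.pi 0 ?_ ?_ ?_ ?_ ?_ ?_ ?_ ?_ ?_⟩ <;>
        simp only [Real.cos_zero, Real.sin_zero, Real.cos_pi, Real.sin_pi, ht1, ht2]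
      · linarith [hK]
      · linarith [hR]
      · linear_combination -hS
      · linear_combination -hP
      · linear_combination hQ.symm
      · linear_combination -hX
      · linear_combination
      · linear_combination -hsbcc
      · linear_combination
end

section
/- Every real 3×3 special orthogonal matrix R (i.e. RᵀR = I and det R = 1) can be written as R = R_z(γ₁) · R_x(γ₂) · R_z(γ₃) for some real numbers γ₁, γ₂, γ₃ (Euler decomposition with z–x–z axes). -/
open Real

noncomputable def Rz (φ : ℝ) : Matrix (Fin 3) (Fin 3) ℝ :=
  !![Real.cos φ, -Real.sin φ, 0;
     Real.sin φ, Real.cos φ, 0;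
     0, 0, 1]

noncomputable def Rx (θ : ℝ) : Matrix (Fin 3) (Fin 3) ℝ :=
  !![1, 0, 0;
     0, Real.cos θ, -Real.sin θ;
     0, Real.sin θ, Real.cos θ]

/-
The third column of `Rz φ * Rx θ` is `(sin φ sin θ, -cos φ sin θ, cos θ)`, i.e. every unit vector in
spherical coordinates; choose `φ, θ` so that it equals the third column of `R`. Then
`(Rz φ * Rx θ)ᵀ * R` is a rotation fixing `e₃`, hence a rotation `Rz ψ` about the `z`-axis.
-/

open Matrix

lemma exists_eq_sqrt_mul_cos_sin (x y : ℝ) :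
    ∃ θ : ℝ, x = √(x ^ 2 + y ^ 2) * cos θ ∧ y = √(x ^ 2 + y ^ 2) * sin θ := by
  have hnorm : ‖(⟨x, y⟩ : ℂ)‖ = √(x ^ 2 + y ^ 2) := Complex.norm_eq_sqrt_sq_add_sq _
  exact ⟨Complex.arg ⟨x, y⟩, by rw [← hnorm, Complex.norm_mul_cos_arg],
    by rw [← hnorm, Complex.norm_mul_sin_arg]⟩

lemma exists_cos_sin_eq_of_sq_add_sq_eq_one {x y : ℝ} (h : x ^ 2 + y ^ 2 = 1) :
    ∃ θ : ℝ, cos θ = x ∧ sin θ = y := by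
  obtain ⟨θ, hx, hy⟩ := exists_eq_sqrt_mul_cos_sin x y
  rw [h, sqrt_one, one_mul] at hx hy
  exact ⟨θ, hx.symm, hy.symm⟩

lemma Rz_transpose_mul_self (φ : ℝ) : (Rz φ)ᵀ * Rz φ = 1 := by
  ext i j
  fin_cases i <;> fin_cases j <;> simp [Rz, Matrix.mul_apply, Fin.sum_univ_three, ← sq, mul_comm]

lemma Rx_transpose_mul_self (θ : ℝ) : (Rx θ)ᵀ * Rx θ = 1 := by
  ext i j
  fin_cases i <;> fin_cases j <;> simp [Rx, Matrix.mul_apply, Fin.sum_univ_three, ← sq, mul_comm]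

lemma det_Rz (φ : ℝ) : (Rz φ).det = 1 := by
  simp [Rz, det_fin_three, ← sq, cos_sq_add_sin_sq]

lemma det_Rx (θ : ℝ) : (Rx θ).det = 1 := by
  simp [Rx, det_fin_three, ← sq, cos_sq_add_sin_sq]

lemma Rz_mul_Rx_apply_two (φ θ : ℝ) (k : Fin 3) :
    (Rz φ * Rx θ) k 2 = ![sin φ * sin θ, -(cos φ * sin θ), cos θ] k := by
  fin_cases k <;> simp [Rz, Rx, Matrix.mul_apply, Fin.sum_univ_three]

lemma exists_Rz_mul_Rx_apply_two_eq {v : Fin 3 → ℝ} (hv : v ⬝ᵥ v = 1) :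
    ∃ φ θ : ℝ, ∀ k, (Rz φ * Rx θ) k 2 = v k := by
  have hv' : v 0 ^ 2 + v 1 ^ 2 + v 2 ^ 2 = 1 := by
    simpa [dotProduct, Fin.sum_univ_three, sq, add_assoc] using hv
  obtain ⟨φ, h0, h1⟩ := exists_eq_sqrt_mul_cos_sin (-v 1) (v 0)
  rw [neg_sq] at h0 h1
  obtain ⟨θ, hcos, hsin⟩ :=
    exists_cos_sin_eq_of_sq_add_sq_eq_one (x := v 2) (y := √(v 1 ^ 2 + v 0 ^ 2)) (by
      rw [sq_sqrt (by positivity)]; linear_combination hv')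
  refine ⟨φ, θ, fun k => ?_⟩
  rw [Rz_mul_Rx_apply_two, hcos, hsin]
  fin_cases k <;> simp only [Fin.zero_eta, Fin.mk_one, Fin.reduceFinMk, cons_val]
  · linear_combination -h1
  · linear_combination h0

lemma exists_eq_Rz_of_apply_two_two_eq_one {M : Matrix (Fin 3) (Fin 3) ℝ}
    (horth : Mᵀ * M = 1) (hdet : M.det = 1) (h22 : M 2 2 = 1) : ∃ γ : ℝ, M = Rz γ := by
  have horth' : M * Mᵀ = 1 := mul_eq_one_comm.mp horth
  have col (i j : Fin 3) : ∑ k, M k i * M k j = if i = j then 1 else 0 := by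
    simpa [Matrix.mul_apply, Matrix.one_apply] using congrFun (congrFun horth i) j
  have row (i j : Fin 3) : ∑ k, M i k * M j k = if i = j then 1 else 0 := by
    simpa [Matrix.mul_apply, Matrix.one_apply] using congrFun (congrFun horth' i) j
  have c0 := col 0 0
  have c1 := col 1 1
  have c2 := col 2 2
  have r2 := row 2 2
  simp only [Fin.sum_univ_three, if_true] at c0 c1 c2 r2
  rw [det_fin_three] at hdet
  rw [h22] at c2 r2
  obtain ⟨h02, h12⟩ : M 0 2 = 0 ∧ M 1 2 = 0 := mul_self_add_mul_self_eq_zero.mp (by linarith)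
  obtain ⟨h20, h21⟩ : M 2 0 = 0 ∧ M 2 1 = 0 := mul_self_add_mul_self_eq_zero.mp (by linarith)
  rw [h02, h12, h20, h21, h22] at hdet
  rw [h20] at c0
  rw [h21] at c1
  -- two unit columns with determinant 1: `(M₀₀ - M₁₁)² + (M₀₁ + M₁₀)² = 2 - 2 det = 0`
  obtain ⟨h11, h01⟩ : M 0 0 - M 1 1 = 0 ∧ M 0 1 + M 1 0 = 0 :=
    mul_self_add_mul_self_eq_zero.mp (by linear_combination c0 + c1 - 2 * hdet)
  rw [sub_eq_zero] at h11
  rw [add_eq_zero_iff_eq_neg] at h01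
  obtain ⟨γ, hc, hs⟩ :=
    exists_cos_sin_eq_of_sq_add_sq_eq_one (x := M 0 0) (y := M 1 0) (by linear_combination c0)
  refine ⟨γ, ?_⟩
  ext i j
  fin_cases i <;> fin_cases j <;> simp [Rz, hc, hs, h01, ← h11, h02, h12, h20, h21, h22]

theorem euler_zxz (R : Matrix (Fin 3) (Fin 3) ℝ)
    (horth : R.transpose * R = 1) (hdet : R.det = 1) :
    ∃ γ₁ γ₂ γ₃ : ℝ, R = Rz γ₁ * Rx γ₂ * Rz γ₃ := by
  obtain ⟨γ₁, γ₂, hcol⟩ := exists_Rz_mul_Rx_apply_two_eq (v := fun k => R k 2) (by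
    simpa [Matrix.mul_apply, dotProduct] using congrFun (congrFun horth 2) 2)
  set Q := Rz γ₁ * Rx γ₂
  have hQ : Qᵀ * Q = 1 := by
    rw [transpose_mul, mul_assoc, ← mul_assoc (Rz γ₁)ᵀ, Rz_transpose_mul_self, one_mul,
      Rx_transpose_mul_self]
  have hQ' : Q * Qᵀ = 1 := mul_eq_one_comm.mp hQ
  obtain ⟨γ₃, hM⟩ := exists_eq_Rz_of_apply_two_two_eq_one (M := Qᵀ * R)
    (by rw [transpose_mul, transpose_transpose, mul_assoc, ← mul_assoc Q, hQ', one_mul, horth])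
    (by rw [det_mul, det_transpose, det_mul, det_Rz, det_Rx, hdet, mul_one, mul_one])
    (by simpa [Matrix.mul_apply, hcol] using congrFun (congrFun horth 2) 2)
  refine ⟨γ₁, γ₂, γ₃, ?_⟩
  rw [← hM, ← mul_assoc, hQ', one_mul]
end

section
/- For every θ ∈ ℝ, the beam splitter coefficients c_θ form a unitary (infinite) matrix: for all (k₁, k₂) and (k₁', k₂') in ℕ², the sum over all (ℓ₁, ℓ₂) ∈ ℕ² of conj(c_θ((k₁, k₂), (ℓ₁, ℓ₂))) · c_θ((k₁', k₂'), (ℓ₁, ℓ₂)) (a finite sum, since c_θ((k₁,k₂),(ℓ₁,ℓ₂)) = 0 unless ℓ₁ + ℓ₂ = k₁ + k₂) equals 1 if (k₁, k₂) = (k₁', k₂') and 0 otherwise. In particular the beam splitter operator B_θ of the many-photon semantics preserves the ℓ² inner product on the two-mode Fock space. -/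
/-!
Identify the Fock state |k₁, k₂⟩ with x₀^k₁ x₁^k₂ / √(k₁! k₂!). The beam splitter with
a = cos θ, b = i sin θ is then the substitution σ_{a,b} : x₀ ↦ a x₀ + b x₁, x₁ ↦ b x₀ + a x₁, and
c_θ(k, l) = √(l!/k!) · [x^l] σ_{a,b}(x^k). Substitutions compose like the matrices
[[a, b], [b, a]]; complex conjugation turns (a, b) into (a, -b), which gives the inverse
substitution because a² - b² = 1. The symmetry l! [x^l] σ(x^k) = k! [x^k] σ(x^l) turns the
conjugated row of c_θ into a column of the coefficient matrix of σ_{a,-b}, so the sum in question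
is an entry of the coefficient matrix of σ_{a,b} ∘ σ_{a,-b} = id.
-/

open Complex Real Finset

noncomputable def bsCoeff (θ : ℝ) (k ℓ : ℕ × ℕ) : ℂ :=
  if ℓ.1 + ℓ.2 = k.1 + k.2 then
    (Real.sqrt ((ℓ.1.factorial * ℓ.2.factorial : ℕ) /
        ((k.1.factorial * k.2.factorial : ℕ) : ℝ)) : ℂ) *
      ∑ pq ∈ (Finset.HasAntidiagonal.antidiagonal ℓ.1).filter (fun pq => pq.1 ≤ k.1 ∧ pq.2 ≤ k.2),
        (k.1.choose pq.1 : ℂ) * (k.2.choose pq.2 : ℂ) *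
          (Real.cos θ : ℂ) ^ (k.2 + pq.1 - pq.2) *
          (Complex.I * Real.sin θ) ^ (k.1 - pq.1 + pq.2)
  else 0

open MvPolynomial Finset.HasAntidiagonal Nat

noncomputable def pairExp : ℕ × ℕ ≃ (Fin 2 →₀ ℕ) :=
  (finTwoArrowEquiv ℕ).symm.trans Finsupp.equivFunOnFinite.symm

theorem X_pow_mul_X_pow_eq_monomial {R : Type*} [CommSemiring R] (m n : ℕ) :
    (X 0 ^ m * X 1 ^ n : MvPolynomial (Fin 2) R) = monomial (pairExp (m, n)) 1 := by
  have hexp : Finsupp.single 0 m + Finsupp.single 1 n = pairExp (m, n) := by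
    ext i
    fin_cases i <;> simp [pairExp]
  rw [X_pow_eq_monomial, X_pow_eq_monomial, monomial_mul, one_mul, hexp]

theorem coeff_X_pow_mul_X_pow {R : Type*} [CommSemiring R] (m n : ℕ) (l : ℕ × ℕ) :
    coeff (pairExp l) (X 0 ^ m * X 1 ^ n : MvPolynomial (Fin 2) R) =
      if (m, n) = l then 1 else 0 := by
  simp [X_pow_mul_X_pow_eq_monomial, coeff_monomial, pairExp.injective.eq_iff]

theorem factorial_mul_factorial_mul_choose_mul_choose {k₁ k₂ l₁ l₂ p q : ℕ} (hp : p ≤ k₁)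
    (hq : q ≤ k₂) (hpq : p + q = l₁) (h : l₁ + l₂ = k₁ + k₂) :
    l₁ ! * l₂ ! * (k₁.choose p * k₂.choose q) = k₁ ! * k₂ ! * (l₁.choose p * l₂.choose (k₁ - p)) := by
  rw [← choose_mul_factorial_mul_factorial (show p ≤ l₁ by omega),
    ← choose_mul_factorial_mul_factorial (show k₁ - p ≤ l₂ by omega),
    ← choose_mul_factorial_mul_factorial hp, ← choose_mul_factorial_mul_factorial hq,
    show l₁ - p = q by omega, show l₂ - (k₁ - p) = k₂ - q by omega]
  ring

section Substitution

variable {R : Type*} [CommSemiring R]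

noncomputable def bsSubst (a b : R) : MvPolynomial (Fin 2) R →ₐ[R] MvPolynomial (Fin 2) R :=
  aeval ![C a * X 0 + C b * X 1, C b * X 0 + C a * X 1]

@[simp] theorem bsSubst_X_zero (a b : R) : bsSubst a b (X 0) = C a * X 0 + C b * X 1 := by
  simp [bsSubst]

@[simp] theorem bsSubst_X_one (a b : R) : bsSubst a b (X 1) = C b * X 0 + C a * X 1 := by
  simp [bsSubst]

@[simp] theorem bsSubst_C (a b c : R) : bsSubst a b (C c) = C c :=
  (bsSubst a b).commutes c

theorem bsSubst_comp (a b a' b' : R) :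
    (bsSubst a b).comp (bsSubst a' b') = bsSubst (a * a' + b * b') (a * b' + b * a') := by
  refine algHom_ext (Fin.forall_fin_two.2 ⟨?_, ?_⟩) <;>
    simp only [AlgHom.comp_apply, bsSubst_X_zero, bsSubst_X_one, map_add, map_mul, bsSubst_C] <;> ring

theorem bsSubst_one_zero : bsSubst (1 : R) 0 = AlgHom.id R _ := by
  refine algHom_ext (Fin.forall_fin_two.2 ⟨?_, ?_⟩) <;> simp

noncomputable def bsMat (a b : R) (k l : ℕ × ℕ) : R :=
  coeff (pairExp l) (bsSubst a b (X 0 ^ k.1 * X 1 ^ k.2))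

theorem bsMat_one_zero (k l : ℕ × ℕ) : bsMat (1 : R) 0 k l = if k = l then 1 else 0 := by
  rw [bsMat, bsSubst_one_zero, AlgHom.id_apply, coeff_X_pow_mul_X_pow]

theorem bsSubst_X_pow_mul_X_pow (a b : R) (k : ℕ × ℕ) :
    bsSubst a b (X 0 ^ k.1 * X 1 ^ k.2) =
      ∑ p ∈ range (k.1 + 1), ∑ q ∈ range (k.2 + 1),
        C ((k.1.choose p * k.2.choose q : R) * (a ^ (p + (k.2 - q)) * b ^ ((k.1 - p) + q))) *
          (X 0 ^ (p + q) * X 1 ^ ((k.1 - p) + (k.2 - q))) := by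
  rw [map_mul, map_pow, map_pow, bsSubst_X_zero, bsSubst_X_one, add_pow, add_pow, sum_mul_sum]
  refine sum_congr rfl fun p _ => sum_congr rfl fun q _ => ?_
  simp only [map_mul, map_pow, map_natCast, pow_add, mul_pow]
  ring

theorem bsMat_eq_sum_range (a b : R) (k l : ℕ × ℕ) :
    bsMat a b k l = ∑ p ∈ range (k.1 + 1), ∑ q ∈ range (k.2 + 1),
      if (p + q, (k.1 - p) + (k.2 - q)) = l then
        (k.1.choose p * k.2.choose q : R) * (a ^ (p + (k.2 - q)) * b ^ ((k.1 - p) + q))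
      else 0 := by
  simp only [bsMat, bsSubst_X_pow_mul_X_pow, coeff_sum, coeff_C_mul, coeff_X_pow_mul_X_pow,
    mul_ite, mul_one, mul_zero]

theorem bsMat_eq_zero_of_ne (a b : R) {k l : ℕ × ℕ} (h : l.1 + l.2 ≠ k.1 + k.2) :
    bsMat a b k l = 0 := by
  rw [bsMat_eq_sum_range]
  refine sum_eq_zero fun p hp => sum_eq_zero fun q hq => if_neg fun he => h ?_
  rw [← he]
  simp only [mem_range] at hp hq
  omega

theorem bsMat_eq_sum (a b : R) {k l : ℕ × ℕ} (h : l.1 + l.2 = k.1 + k.2) :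
    bsMat a b k l = ∑ pq ∈ (antidiagonal l.1).filter (fun pq => pq.1 ≤ k.1 ∧ pq.2 ≤ k.2),
      (k.1.choose pq.1 : R) * (k.2.choose pq.2 : R) * a ^ (k.2 + pq.1 - pq.2) *
        b ^ (k.1 - pq.1 + pq.2) := by
  have hsupp : ((range (k.1 + 1)) ×ˢ (range (k.2 + 1))).filter
      (fun pq => (pq.1 + pq.2, (k.1 - pq.1) + (k.2 - pq.2)) = l)
      = (antidiagonal l.1).filter (fun pq => pq.1 ≤ k.1 ∧ pq.2 ≤ k.2) := by
    ext pq
    simp only [mem_filter, mem_product, mem_range, HasAntidiagonal.mem_antidiagonal, Prod.ext_iff]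
    omega
  rw [bsMat_eq_sum_range, ← sum_product', ← sum_filter, hsupp]
  refine sum_congr rfl fun pq hpq => ?_
  simp only [mem_filter, HasAntidiagonal.mem_antidiagonal] at hpq
  rw [show pq.1 + (k.2 - pq.2) = k.2 + pq.1 - pq.2 by omega, ← mul_assoc]

theorem map_bsMat {S : Type*} [CommSemiring S] (f : R →+* S) (a b : R) (k l : ℕ × ℕ) :
    f (bsMat a b k l) = bsMat (f a) (f b) k l := by
  simp only [bsMat_eq_sum_range, map_sum, apply_ite f, map_mul, map_pow, map_natCast, map_zero]

theorem bsSubst_eq_sum_bsMat (a b : R) (k : ℕ × ℕ) :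
    bsSubst a b (X 0 ^ k.1 * X 1 ^ k.2) =
      ∑ l ∈ antidiagonal (k.1 + k.2), C (bsMat a b k l) * (X 0 ^ l.1 * X 1 ^ l.2) := by
  ext d
  obtain ⟨m, rfl⟩ := pairExp.surjective d
  simp only [coeff_sum, coeff_C_mul, coeff_X_pow_mul_X_pow, mul_ite, mul_one, mul_zero,
    Prod.mk.eta, sum_ite_eq']
  split_ifs with hm
  · rfl
  · exact bsMat_eq_zero_of_ne a b (by simpa using hm)

theorem bsMat_comp (a b a' b' : R) (k m : ℕ × ℕ) :
    bsMat (a * a' + b * b') (a * b' + b * a') k m =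
      ∑ l ∈ antidiagonal (k.1 + k.2), bsMat a' b' k l * bsMat a b l m := by
  rw [bsMat, ← bsSubst_comp, AlgHom.comp_apply, bsSubst_eq_sum_bsMat, map_sum, coeff_sum]
  simp only [map_mul, bsSubst_C, coeff_C_mul, bsMat]

-- σ_{a,b} is self-adjoint for the pairing ⟨x^k, x^l⟩ = k₁! k₂! δ_{kl}, its matrix being symmetric.
theorem factorial_mul_bsMat_symm (a b : R) (k l : ℕ × ℕ) :
    (l.1 ! * l.2 ! : R) * bsMat a b k l = (k.1 ! * k.2 ! : R) * bsMat a b l k := by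
  by_cases h : l.1 + l.2 = k.1 + k.2
  · rw [bsMat_eq_sum a b h, bsMat_eq_sum a b h.symm, mul_sum, mul_sum]
    refine sum_nbij' (fun pq => (pq.1, k.1 - pq.1)) (fun pq => (pq.1, l.1 - pq.1)) ?_ ?_ ?_ ?_ ?_
      <;> intro pq hpq <;> simp only [mem_filter, HasAntidiagonal.mem_antidiagonal] at hpq ⊢
    · omega
    · omega
    · exact Prod.ext rfl (by omega)
    · exact Prod.ext rfl (by omega)
    obtain ⟨hsum, hp, hq⟩ := hpq
    have key : (l.1 ! * l.2 ! : R) * (k.1.choose pq.1 * k.2.choose pq.2) =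
        (k.1 ! * k.2 ! : R) * (l.1.choose pq.1 * l.2.choose (k.1 - pq.1)) := by
      exact_mod_cast congrArg (Nat.cast : ℕ → R)
        (factorial_mul_factorial_mul_choose_mul_choose hp hq hsum h)
    rw [show l.2 + pq.1 - (k.1 - pq.1) = k.2 + pq.1 - pq.2 by omega,
      show l.1 - pq.1 + (k.1 - pq.1) = k.1 - pq.1 + pq.2 by omega]
    calc _ = (l.1 ! * l.2 ! : R) * (k.1.choose pq.1 * k.2.choose pq.2) *
          (a ^ (k.2 + pq.1 - pq.2) * b ^ (k.1 - pq.1 + pq.2)) := by ring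
      _ = _ := by rw [key]; ring
  · rw [bsMat_eq_zero_of_ne a b h, bsMat_eq_zero_of_ne a b (Ne.symm h), mul_zero, mul_zero]

end Substitution

noncomputable def fockNorm (k : ℕ × ℕ) : ℝ := √((k.1 ! * k.2 ! : ℕ) : ℝ)

theorem fockNorm_pos (k : ℕ × ℕ) : 0 < fockNorm k :=
  Real.sqrt_pos.2 (by positivity)

theorem ofReal_fockNorm_sq (k : ℕ × ℕ) : (fockNorm k : ℂ) ^ 2 = (k.1 ! * k.2 ! : ℂ) := by
  rw [← ofReal_pow, fockNorm, Real.sq_sqrt (by positivity)]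
  norm_cast

theorem bsCoeff_eq_mul_bsMat (θ : ℝ) (k l : ℕ × ℕ) :
    bsCoeff θ k l = (fockNorm l / fockNorm k : ℂ) * bsMat (Real.cos θ : ℂ) (I * Real.sin θ) k l := by
  unfold bsCoeff
  split_ifs with h
  · rw [bsMat_eq_sum _ _ h, fockNorm, fockNorm, ← ofReal_div, ← Real.sqrt_div' _ (by positivity)]
  · rw [bsMat_eq_zero_of_ne _ _ h, mul_zero]

theorem fockNorm_div_mul_bsMat_symm (a b : ℂ) (k l : ℕ × ℕ) :
    (fockNorm l / fockNorm k : ℂ) * bsMat a b k l =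
      (fockNorm k / fockNorm l : ℂ) * bsMat a b l k := by
  have hk := ofReal_ne_zero.2 (fockNorm_pos k).ne'
  have hl := ofReal_ne_zero.2 (fockNorm_pos l).ne'
  field_simp
  rw [ofReal_fockNorm_sq, ofReal_fockNorm_sq]
  exact factorial_mul_bsMat_symm a b k l

theorem bsCoeff_unitary (θ : ℝ) (k k' : ℕ × ℕ) :
    ∑' ℓ : ℕ × ℕ, (starRingEnd ℂ) (bsCoeff θ k ℓ) * bsCoeff θ k' ℓ =
      if k = k' then 1 else 0 := by
  set a : ℂ := (Real.cos θ : ℂ)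
  set b : ℂ := I * (Real.sin θ : ℂ)
  have hconj : starRingEnd ℂ b = -b := by
    rw [map_mul, conj_I, conj_ofReal, neg_mul]
  have hterm (l : ℕ × ℕ) : starRingEnd ℂ (bsCoeff θ k l) * bsCoeff θ k' l =
      (fockNorm k' / fockNorm k : ℂ) * (bsMat a (-b) k l * bsMat a b l k') := by
    rw [bsCoeff_eq_mul_bsMat, bsCoeff_eq_mul_bsMat, fockNorm_div_mul_bsMat_symm _ _ k' l, map_mul,
      map_bsMat, map_div₀, conj_ofReal, conj_ofReal, conj_ofReal, hconj, mul_mul_mul_comm]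
    congr 1
    field_simp [ofReal_ne_zero.2 (fockNorm_pos l).ne']
  have hinv : a * a + b * -b = 1 := by
    have h : (Real.sin θ : ℂ) ^ 2 + (Real.cos θ : ℂ) ^ 2 = 1 := by
      exact_mod_cast Real.sin_sq_add_cos_sq θ
    linear_combination h - (Real.sin θ : ℂ) ^ 2 * I_sq
  rw [tsum_eq_sum (s := antidiagonal (k.1 + k.2)) ?_, sum_congr rfl fun l _ => hterm l,
    ← mul_sum, ← bsMat_comp, hinv, show a * -b + b * a = 0 by ring, bsMat_one_zero]
  · split_ifs with h
    · simp [h, ofReal_ne_zero.2 (fockNorm_pos k').ne']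
    · rw [mul_zero]
  · intro l hl
    rw [bsCoeff, if_neg (by simpa using hl), map_zero, zero_mul]
end

section
/- Let θ ∈ ℝ and let B_θ be the linear endomorphism of the space of finitely supported functions ℕ² → ℂ sending the basis vector e_{(k₁,k₂)} to Σ_{(ℓ₁,ℓ₂)} c_θ((k₁,k₂),(ℓ₁,ℓ₂)) · e_{(ℓ₁,ℓ₂)}. Let a₁† and a₂† be the creation operators, i.e. the linear maps with a₁†(e_{(k₁,k₂)}) = √(k₁+1) · e_{(k₁+1,k₂)} and a₂†(e_{(k₁,k₂)}) = √(k₂+1) · e_{(k₁,k₂+1)}. Then B_θ ∘ a₁† = cos θ · (a₁† ∘ B_θ) + i·sin θ · (a₂† ∘ B_θ) and B_θ ∘ a₂† = i·sin θ · (a₁† ∘ B_θ) + cos θ · (a₂† ∘ B_θ). (This is the commutation rule of the creation operators through a beam splitter.) -/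
/-!
Up to the normalisation `√(ℓ₁! ℓ₂! / k₁! k₂!)`, `c_θ(k, ℓ)` is the coefficient of `X ^ ℓ₁` in
`bsPoly θ k = (a X + b) ^ k₁ * (b X + a) ^ k₂`, that is, of `x ^ ℓ₁ y ^ ℓ₂` in
`(a x + b y) ^ k₁ * (b x + a y) ^ k₂` at `y = 1`. Raising `k₁` by one multiplies `bsPoly` by
`a X + b`, so each coefficient becomes `a` times its predecessor plus `b` times itself; after
renormalisation the first term is `a₁† ∘ B_θ` and the second `a₂† ∘ B_θ`. Raising `k₂` is the same
with `a` and `b` exchanged.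
-/

open Complex Real Finset

open Polynomial

theorem Polynomial.coeff_C_mul_X_add_C_pow {R : Type*} [CommSemiring R] (u v : R) (n p : ℕ) :
    ((C u * X + C v) ^ n).coeff p = n.choose p * u ^ p * v ^ (n - p) := by
  have hterm (j : ℕ) : (C u * X) ^ j * C v ^ (n - j) * (n.choose j : R[X]) =
      C (n.choose j * u ^ j * v ^ (n - j)) * X ^ j := by
    simp only [map_mul, map_pow, map_natCast]; ring
  simp_rw [add_pow, finsetSum_coeff, hterm, coeff_C_mul_X_pow, Finset.sum_ite_eq, Finset.mem_range]
  split_ifs with hp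
  · rfl
  · simp [Nat.choose_eq_zero_of_lt (not_lt.mp hp)]

noncomputable def bsPoly (θ : ℝ) (k : ℕ × ℕ) : ℂ[X] :=
  (C (Real.cos θ : ℂ) * X + C (I * Real.sin θ)) ^ k.1 *
    (C (I * Real.sin θ) * X + C (Real.cos θ : ℂ)) ^ k.2

theorem bsPoly_succ_fst (θ : ℝ) (k : ℕ × ℕ) :
    bsPoly θ (k.1 + 1, k.2) = (C (Real.cos θ : ℂ) * X + C (I * Real.sin θ)) * bsPoly θ k := by
  rw [bsPoly, bsPoly, pow_succ]; ring

theorem bsPoly_succ_snd (θ : ℝ) (k : ℕ × ℕ) :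
    bsPoly θ (k.1, k.2 + 1) = (C (I * Real.sin θ) * X + C (Real.cos θ : ℂ)) * bsPoly θ k := by
  rw [bsPoly, bsPoly, pow_succ]; ring

theorem coeff_bsPoly_eq_zero (θ : ℝ) {k : ℕ × ℕ} {n : ℕ} (hn : k.1 + k.2 < n) :
    (bsPoly θ k).coeff n = 0 := by
  refine coeff_eq_zero_of_natDegree_lt (lt_of_le_of_lt ?_ hn)
  refine (natDegree_mul_le).trans (add_le_add ?_ ?_) <;>
    exact natDegree_pow_le_of_le _ natDegree_linear_le |>.trans (mul_one _).le

theorem coeff_bsPoly (θ : ℝ) (k : ℕ × ℕ) (n : ℕ) :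
    (bsPoly θ k).coeff n =
      ∑ pq ∈ (antidiagonal n).filter (fun pq => pq.1 ≤ k.1 ∧ pq.2 ≤ k.2),
        (k.1.choose pq.1 : ℂ) * (k.2.choose pq.2 : ℂ) *
          (Real.cos θ : ℂ) ^ (k.2 + pq.1 - pq.2) * (I * Real.sin θ) ^ (k.1 - pq.1 + pq.2) := by
  rw [bsPoly, coeff_mul, Finset.sum_filter]
  refine Finset.sum_congr rfl fun ⟨p, q⟩ hpq => ?_
  simp only [coeff_C_mul_X_add_C_pow]
  split_ifs with h
  · obtain ⟨hp, hq⟩ := h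
    rw [show k.2 + p - q = p + (k.2 - q) by omega, pow_add, pow_add]
    ring
  · rcases not_and_or.mp h with h | h <;>
      simp [Nat.choose_eq_zero_of_lt (not_le.mp h)]

noncomputable def sqrtFact (k : ℕ × ℕ) : ℝ := √((k.1.factorial * k.2.factorial : ℕ) : ℝ)

theorem sqrtFact_ne_zero (k : ℕ × ℕ) : sqrtFact k ≠ 0 :=
  (Real.sqrt_pos.2 (by positivity)).ne'

theorem sqrtFact_succ_fst (k : ℕ × ℕ) :
    sqrtFact (k.1 + 1, k.2) = √(k.1 + 1) * sqrtFact k := by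
  rw [sqrtFact, sqrtFact, ← Real.sqrt_mul (by positivity), Nat.factorial_succ]
  push_cast; ring_nf

theorem sqrtFact_succ_snd (k : ℕ × ℕ) :
    sqrtFact (k.1, k.2 + 1) = √(k.2 + 1) * sqrtFact k := by
  rw [sqrtFact, sqrtFact, ← Real.sqrt_mul (by positivity), Nat.factorial_succ]
  push_cast; ring_nf

theorem bsCoeff_eq (θ : ℝ) (k ℓ : ℕ × ℕ) :
    bsCoeff θ k ℓ =
      if ℓ.1 + ℓ.2 = k.1 + k.2 then ((sqrtFact ℓ / sqrtFact k : ℝ) : ℂ) * (bsPoly θ k).coeff ℓ.1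
      else 0 := by
  rw [bsCoeff, coeff_bsPoly, sqrtFact, sqrtFact, ← Real.sqrt_div' _ (by positivity)]

theorem sqrt_succ_fst_mul_bsCoeff_eq_ite (θ : ℝ) (k m : ℕ × ℕ) :
    (√(k.1 + 1) : ℂ) * bsCoeff θ (k.1 + 1, k.2) m =
      if m.1 + m.2 = k.1 + k.2 + 1 then
        ((sqrtFact m / sqrtFact k : ℝ) : ℂ) * (bsPoly θ (k.1 + 1, k.2)).coeff m.1
      else 0 := by
  rw [bsCoeff_eq, sqrtFact_succ_fst]
  simp only [add_right_comm k.1 1 k.2]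
  split_ifs
  · have := sqrtFact_ne_zero k
    have : √(k.1 + 1 : ℝ) ≠ 0 := (Real.sqrt_pos.2 (by positivity)).ne'
    push_cast
    field_simp
  · rw [mul_zero]

theorem sqrt_succ_snd_mul_bsCoeff_eq_ite (θ : ℝ) (k m : ℕ × ℕ) :
    (√(k.2 + 1) : ℂ) * bsCoeff θ (k.1, k.2 + 1) m =
      if m.1 + m.2 = k.1 + k.2 + 1 then
        ((sqrtFact m / sqrtFact k : ℝ) : ℂ) * (bsPoly θ (k.1, k.2 + 1)).coeff m.1
      else 0 := by
  rw [bsCoeff_eq, sqrtFact_succ_snd]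
  simp only [← add_assoc]
  split_ifs
  · have := sqrtFact_ne_zero k
    have : √(k.2 + 1 : ℝ) ≠ 0 := (Real.sqrt_pos.2 (by positivity)).ne'
    push_cast
    field_simp
  · rw [mul_zero]

-- The factor `√m.1` kills the junk index `0 - 1 = 0` when `m.1 = 0`; likewise below for `m.2`.
theorem sqrt_fst_mul_bsCoeff_pred_fst_eq_ite (θ : ℝ) (k m : ℕ × ℕ) :
    (√m.1 : ℂ) * bsCoeff θ k (m.1 - 1, m.2) =
      if m.1 + m.2 = k.1 + k.2 + 1 then
        ((sqrtFact m / sqrtFact k : ℝ) : ℂ) * (X * bsPoly θ k).coeff m.1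
      else 0 := by
  obtain ⟨_ | n, m₂⟩ := m
  · simp
  · rw [bsCoeff_eq]
    simp only [Nat.add_sub_cancel, coeff_X_mul, sqrtFact_succ_fst (n, m₂),
      show n + 1 + m₂ = k.1 + k.2 + 1 ↔ n + m₂ = k.1 + k.2 by omega]
    split_ifs
    · push_cast; ring
    · rw [mul_zero]

theorem sqrt_snd_mul_bsCoeff_pred_snd_eq_ite (θ : ℝ) (k m : ℕ × ℕ) :
    (√m.2 : ℂ) * bsCoeff θ k (m.1, m.2 - 1) =
      if m.1 + m.2 = k.1 + k.2 + 1 then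
        ((sqrtFact m / sqrtFact k : ℝ) : ℂ) * (bsPoly θ k).coeff m.1
      else 0 := by
  obtain ⟨m₁, _ | n⟩ := m
  · split_ifs with h
    · simp [coeff_bsPoly_eq_zero θ (show k.1 + k.2 < m₁ by omega)]
    · simp
  · rw [bsCoeff_eq]
    simp only [Nat.add_sub_cancel, sqrtFact_succ_snd (m₁, n), ← add_assoc,
      show m₁ + n + 1 = k.1 + k.2 + 1 ↔ m₁ + n = k.1 + k.2 by omega]
    split_ifs
    · push_cast; ring
    · rw [mul_zero]

theorem sqrt_succ_fst_mul_bsCoeff (θ : ℝ) (k m : ℕ × ℕ) :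
    (√(k.1 + 1) : ℂ) * bsCoeff θ (k.1 + 1, k.2) m =
      (Real.cos θ : ℂ) * ((√m.1 : ℂ) * bsCoeff θ k (m.1 - 1, m.2)) +
        I * Real.sin θ * ((√m.2 : ℂ) * bsCoeff θ k (m.1, m.2 - 1)) := by
  rw [sqrt_succ_fst_mul_bsCoeff_eq_ite, sqrt_fst_mul_bsCoeff_pred_fst_eq_ite,
    sqrt_snd_mul_bsCoeff_pred_snd_eq_ite, bsPoly_succ_fst]
  split_ifs
  · simp only [add_mul, coeff_add, mul_assoc, coeff_C_mul]; ring
  · ring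

theorem sqrt_succ_snd_mul_bsCoeff (θ : ℝ) (k m : ℕ × ℕ) :
    (√(k.2 + 1) : ℂ) * bsCoeff θ (k.1, k.2 + 1) m =
      I * Real.sin θ * ((√m.1 : ℂ) * bsCoeff θ k (m.1 - 1, m.2)) +
        (Real.cos θ : ℂ) * ((√m.2 : ℂ) * bsCoeff θ k (m.1, m.2 - 1)) := by
  rw [sqrt_succ_snd_mul_bsCoeff_eq_ite, sqrt_fst_mul_bsCoeff_pred_fst_eq_ite,
    sqrt_snd_mul_bsCoeff_pred_snd_eq_ite, bsPoly_succ_snd]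
  split_ifs
  · simp only [add_mul, coeff_add, mul_assoc, coeff_C_mul]; ring
  · ring

theorem Finsupp.linearMap_apply_eq_mul_apply_of_single {R α β : Type*} [CommSemiring R]
    (T : (α →₀ R) →ₗ[R] (β →₀ R)) (w : β → R) (τ : β → α)
    (hT : ∀ k m, T (Finsupp.single k 1) m = w m * Finsupp.single k 1 (τ m))
    (f : α →₀ R) (m : β) : T f m = w m * f (τ m) := by
  induction f using Finsupp.induction_linear with
  | zero => simp
  | add f g hf hg => simp only [map_add, Finsupp.add_apply, hf, hg, mul_add]
  | single k c =>
    rw [← mul_one c, ← smul_eq_mul, ← Finsupp.smul_single, map_smul, Finsupp.smul_apply,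
      Finsupp.smul_apply, hT, smul_eq_mul, smul_eq_mul, mul_left_comm]

theorem creation_fst_apply (a : ((ℕ × ℕ) →₀ ℂ) →ₗ[ℂ] ((ℕ × ℕ) →₀ ℂ))
    (ha : ∀ k : ℕ × ℕ,
      a (Finsupp.single k 1) = (√(k.1 + 1) : ℂ) • Finsupp.single (k.1 + 1, k.2) 1)
    (f : (ℕ × ℕ) →₀ ℂ) (m : ℕ × ℕ) : a f m = √m.1 * f (m.1 - 1, m.2) := by
  refine Finsupp.linearMap_apply_eq_mul_apply_of_single a (fun m => (√m.1 : ℂ))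
    (fun m => (m.1 - 1, m.2)) (fun k m => ?_) f m
  obtain ⟨_ | n, m₂⟩ := m
  · simp [ha, Finsupp.single_apply]
  · simp only [ha, Finsupp.smul_apply, Finsupp.single_apply, Prod.ext_iff, smul_eq_mul]
    grind

theorem creation_snd_apply (a : ((ℕ × ℕ) →₀ ℂ) →ₗ[ℂ] ((ℕ × ℕ) →₀ ℂ))
    (ha : ∀ k : ℕ × ℕ,
      a (Finsupp.single k 1) = (√(k.2 + 1) : ℂ) • Finsupp.single (k.1, k.2 + 1) 1)
    (f : (ℕ × ℕ) →₀ ℂ) (m : ℕ × ℕ) : a f m = √m.2 * f (m.1, m.2 - 1) := by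
  refine Finsupp.linearMap_apply_eq_mul_apply_of_single a (fun m => (√m.2 : ℂ))
    (fun m => (m.1, m.2 - 1)) (fun k m => ?_) f m
  obtain ⟨m₁, _ | n⟩ := m
  · simp [ha, Finsupp.single_apply]
  · simp only [ha, Finsupp.smul_apply, Finsupp.single_apply, Prod.ext_iff, smul_eq_mul]
    grind

theorem bs_creation_commutation (θ : ℝ)
    (B a₁ a₂ : ((ℕ × ℕ) →₀ ℂ) →ₗ[ℂ] ((ℕ × ℕ) →₀ ℂ))
    (hB : ∀ k ℓ : ℕ × ℕ, B (Finsupp.single k 1) ℓ = bsCoeff θ k ℓ)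
    (hA1 : ∀ k : ℕ × ℕ,
      a₁ (Finsupp.single k 1) =
        (Real.sqrt (k.1 + 1) : ℂ) • Finsupp.single (k.1 + 1, k.2) 1)
    (hA2 : ∀ k : ℕ × ℕ,
      a₂ (Finsupp.single k 1) =
        (Real.sqrt (k.2 + 1) : ℂ) • Finsupp.single (k.1, k.2 + 1) 1) :
    B ∘ₗ a₁ = (Real.cos θ : ℂ) • (a₁ ∘ₗ B) + (Complex.I * Real.sin θ) • (a₂ ∘ₗ B) ∧
    B ∘ₗ a₂ = (Complex.I * Real.sin θ) • (a₁ ∘ₗ B) + (Real.cos θ : ℂ) • (a₂ ∘ₗ B) := by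
  constructor <;> refine Finsupp.basisSingleOne.ext fun k => Finsupp.ext fun m => ?_ <;>
    simp only [Finsupp.coe_basisSingleOne, LinearMap.comp_apply, LinearMap.add_apply,
      LinearMap.smul_apply, Finsupp.add_apply, Finsupp.smul_apply, smul_eq_mul, map_smul,
      hA1, hA2, creation_fst_apply a₁ hA1, creation_snd_apply a₂ hA2, hB]
  · exact sqrt_succ_fst_mul_bsCoeff θ k m
  · exact sqrt_succ_snd_mul_bsCoeff θ k m
end

section
/- Let a, a' be real numbers with 0 < a ≤ 1 and 0 < a' ≤ 1, let φ, φ' be real numbers, and let P, P' be polynomials with complex coefficients with P' ≠ 0. Suppose there exists N₀ ∈ ℕ such that for every natural number N ≥ N₀, e^{iNφ} · a^N · P(N) = e^{iNφ'} · (a')^N · P'(N). Then a = a', e^{iφ} = e^{iφ'}, and P = P'. (This asymptotic rigidity statement is the analytic core of the base case of the uniqueness of the triangular circuit in the normal forms.) -/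
/-!
Put `z = e^{iφ} a` and `z' = e^{iφ'} a'`, so the hypothesis reads `z^N P(N) = z'^N P'(N)`
for large `N`. With `w = z / z'` this is `w^N P(N) = P'(N)`; comparing it at `N` and `N + 1`
gives the polynomial identity `w P(X + 1) P'(X) = P'(X + 1) P(X)`, whose leading coefficients
force `w = 1`. Then `P = P'` because they agree at infinitely many points, and `z = z'` gives
`a = |z| = |z'| = a'`, hence `e^{iφ} = e^{iφ'}`.
-/

open Complex Polynomial Filter

namespace Polynomial

variable {K : Type*} [Field K] [CharZero K] {P Q : K[X]} {w z z' : K}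

theorem eq_of_eventually_eval_natCast_eq
    (h : ∀ᶠ N : ℕ in atTop, P.eval (N : K) = Q.eval (N : K)) : P = Q := by
  refine eq_of_infinite_eval_eq P Q (Set.Infinite.mono ?_ ((Nat.frequently_atTop_iff_infinite.1
    h.frequently).image Nat.cast_injective.injOn))
  rintro _ ⟨N, hN, rfl⟩
  exact hN

theorem eq_one_of_eventually_pow_mul_eval_natCast_eq (hQ : Q ≠ 0)
    (h : ∀ᶠ N : ℕ in atTop, w ^ N * P.eval (N : K) = Q.eval (N : K)) : w = 1 := by
  have hw : w ≠ 0 := by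
    rintro rfl
    refine hQ (eq_of_eventually_eval_natCast_eq ?_)
    filter_upwards [h, eventually_ge_atTop 1] with N hN hN1
    rw [← hN, zero_pow (by omega), zero_mul, eval_zero]
  have hP : P ≠ 0 := by
    rintro rfl
    refine hQ (eq_of_eventually_eval_natCast_eq ?_)
    filter_upwards [h] with N hN
    rw [← hN, eval_zero, mul_zero]
  have shift : C w * taylor 1 P * Q = taylor 1 Q * P := by
    refine eq_of_eventually_eval_natCast_eq ?_
    filter_upwards [h, tendsto_add_atTop_nat 1 |>.eventually h] with N hN hN1
    push_cast at hN1
    simp only [eval_mul, eval_C, taylor_eval]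
    refine mul_left_cancel₀ (pow_ne_zero N hw) ?_
    calc w ^ N * (w * P.eval (N + 1 : K) * Q.eval (N : K))
        = w ^ (N + 1) * P.eval (N + 1 : K) * Q.eval (N : K) := by ring
      _ = w ^ N * (Q.eval (N + 1 : K) * P.eval (N : K)) := by rw [hN1, ← hN]; ring
  have lc := congrArg leadingCoeff shift
  simp only [leadingCoeff_mul, leadingCoeff_C, leadingCoeff_taylor] at lc
  exact mul_right_cancel₀ (mul_ne_zero (leadingCoeff_ne_zero.2 hP) (leadingCoeff_ne_zero.2 hQ))
    (by linear_combination lc)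

theorem eq_and_eq_of_eventually_pow_mul_eval_natCast_eq (hz' : z' ≠ 0) (hQ : Q ≠ 0)
    (h : ∀ᶠ N : ℕ in atTop, z ^ N * P.eval (N : K) = z' ^ N * Q.eval (N : K)) :
    z = z' ∧ P = Q := by
  have h' : ∀ᶠ N : ℕ in atTop, (z / z') ^ N * P.eval (N : K) = Q.eval (N : K) := by
    filter_upwards [h] with N hN
    rw [div_pow, div_mul_eq_mul_div, hN, mul_div_cancel_left₀ _ (pow_ne_zero N hz')]
  have hw := eq_one_of_eventually_pow_mul_eval_natCast_eq hQ h'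
  refine ⟨(div_eq_one_iff_eq hz').1 hw, eq_of_eventually_eval_natCast_eq ?_⟩
  filter_upwards [h'] with N hN
  rwa [hw, one_pow, one_mul] at hN

end Polynomial

theorem Complex.exp_mul_I_mul_ofReal_pow (φ a : ℝ) (N : ℕ) :
    exp (I * N * φ) * (a : ℂ) ^ N = (exp (I * φ) * a) ^ N := by
  rw [mul_pow, ← exp_nat_mul]
  ring_nf

theorem Complex.norm_exp_I_mul_ofReal_mul_ofReal {φ a : ℝ} (ha : 0 ≤ a) :
    ‖exp (I * φ) * a‖ = a := by
  rw [norm_mul, mul_comm I, norm_exp_ofReal_mul_I, one_mul, norm_real, Real.norm_of_nonneg ha]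

theorem asymptotic_rigidity_general (a a' φ φ' : ℝ) (P P' : Polynomial ℂ)
    (ha : 0 < a) (ha' : 0 < a')
    (hP' : P' ≠ 0)
    (h : ∃ N₀ : ℕ, ∀ N : ℕ, N₀ ≤ N →
      Complex.exp (Complex.I * N * φ) * (a : ℂ) ^ N * P.eval (N : ℂ) =
        Complex.exp (Complex.I * N * φ') * (a' : ℂ) ^ N * P'.eval (N : ℂ)) :
    a = a' ∧ Complex.exp (Complex.I * φ) = Complex.exp (Complex.I * φ') ∧ P = P' := by
  have hz' : exp (I * φ') * (a' : ℂ) ≠ 0 :=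
    mul_ne_zero (exp_ne_zero _) (ofReal_ne_zero.2 ha'.ne')
  have h' := eventually_atTop.2 h
  simp only [exp_mul_I_mul_ofReal_pow] at h'
  obtain ⟨hz, rfl⟩ := eq_and_eq_of_eventually_pow_mul_eval_natCast_eq hz' hP' h'
  have haa : a = a' := by
    rw [← norm_exp_I_mul_ofReal_mul_ofReal ha.le, hz, norm_exp_I_mul_ofReal_mul_ofReal ha'.le]
  subst haa
  exact ⟨rfl, mul_right_cancel₀ (ofReal_ne_zero.2 ha.ne') hz, rfl⟩

theorem asymptotic_rigidity (a a' φ φ' : ℝ) (P P' : Polynomial ℂ)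
    (ha : 0 < a) (ha1 : a ≤ 1) (ha' : 0 < a') (ha1' : a' ≤ 1)
    (hP' : P' ≠ 0)
    (h : ∃ N₀ : ℕ, ∀ N : ℕ, N₀ ≤ N →
      Complex.exp (Complex.I * N * φ) * (a : ℂ) ^ N * P.eval (N : ℂ) =
        Complex.exp (Complex.I * N * φ') * (a' : ℂ) ^ N * P'.eval (N : ℂ)) :
    a = a' ∧ Complex.exp (Complex.I * φ) = Complex.exp (Complex.I * φ') ∧ P = P' :=
  asymptotic_rigidity_general a a' φ φ' P P' ha ha' hP' h
end

section
/- For every n ≥ 1, every n×n complex unitary matrix U is a finite product of matrices of the following two kinds: (i) phase shifter matrices D_{j,φ}, equal to the identity except that the (j, j) diagonal entry is e^{iφ}, for some index j and some φ ∈ ℝ; and (ii) beam splitter matrices S_{j,θ}, equal to the identity except that the 2×2 block on the adjacent rows and columns j, j+1 equals [[cos θ, i·sin θ], [i·sin θ, cos θ]], for some index j with j+1 ≤ n and some θ ∈ ℝ. (This is the universality of LOpp-circuits for U(n) at the level of single-photon semantics, used in the existence part of the triangular normal form.) -/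
open Complex Real

/-- Phase shifter matrix: identity except that the `(j, j)` entry is `e^{iφ}`. -/
noncomputable def psMatrix (n : ℕ) (j : Fin n) (φ : ℝ) : Matrix (Fin n) (Fin n) ℂ :=
  Matrix.diagonal fun i => if i = j then Complex.exp (Complex.I * φ) else 1

/-- Beam splitter matrix on adjacent wires `j` and `j+1` (0-indexed): identity except for
the 2×2 block `[[cos θ, i sin θ], [i sin θ, cos θ]]` on rows and columns `j`, `j+1`. -/
noncomputable def bsMatrix (n : ℕ) (j : ℕ) (θ : ℝ) : Matrix (Fin n) (Fin n) ℂ :=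
  fun i i' =>
    if ((i : ℕ) = j ∧ (i' : ℕ) = j) ∨ ((i : ℕ) = j + 1 ∧ (i' : ℕ) = j + 1) then
      (Real.cos θ : ℂ)
    else if ((i : ℕ) = j ∧ (i' : ℕ) = j + 1) ∨ ((i : ℕ) = j + 1 ∧ (i' : ℕ) = j) then
      Complex.I * Real.sin θ
    else if i = i' then 1 else 0

/-! Reck-style elimination. Phase shifters on two adjacent modes followed by a beam splitter send
`a e_j + b e_{j+1}` to a multiple of `e_{j+1}`, so a circuit on the first `k + 1` modes moves any
vector supported there onto `e_k`. If a unitary `U` fixes `e_i` for every `i > k`, orthogonality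
of columns puts column `k` of `U` in that support; clearing it and correcting the phase leaves a
unitary fixing `e_i` for all `i ≥ k`, a circuit by induction, and `U` is recovered from it because
the gates are unitary and closed under `star`. -/

open Matrix

lemma mem_unitary_of_map_add {R : Type*} [Monoid R] [StarMul R] {f : ℝ → R}
    (hadd : ∀ a b, f a * f b = f (a + b)) (hzero : f 0 = 1) (hstar : ∀ a, star (f a) = f (-a))
    (a : ℝ) : f a ∈ unitary R := by
  rw [Unitary.mem_iff, hstar, hadd, hadd, neg_add_cancel, add_neg_cancel, hzero]
  exact ⟨rfl, rfl⟩

lemma exists_exp_I_mul_eq_of_norm_eq {z w : ℂ} (h : ‖z‖ = ‖w‖) :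
    ∃ φ : ℝ, exp (I * φ) * z = w := by
  rcases eq_or_ne z 0 with rfl | hz
  · exact ⟨0, by simpa [eq_comm] using h⟩
  have hw : ‖w‖ ≠ 0 := h ▸ norm_ne_zero_iff.2 hz
  obtain ⟨φ, hφ⟩ := (norm_eq_one_iff (w / z)).1 (by rw [norm_div, h, div_self hw])
  exact ⟨φ, by rw [mul_comm I, hφ, div_mul_cancel₀ w hz]⟩

section PhaseShifter

variable {n : ℕ} (j : Fin n)

lemma psMatrix_mulVec_single (φ : ℝ) (i : Fin n) (x : ℂ) :
    psMatrix n j φ *ᵥ Pi.single i x =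
      Pi.single i ((if i = j then exp (I * φ) else 1) * x) :=
  diagonal_mulVec_single _ _ _

lemma psMatrix_mulVec_single_self (φ : ℝ) (x : ℂ) :
    psMatrix n j φ *ᵥ Pi.single j x = Pi.single j (exp (I * φ) * x) := by
  rw [psMatrix_mulVec_single, if_pos rfl]

lemma psMatrix_mulVec_single_of_ne {i : Fin n} (h : i ≠ j) (φ : ℝ) (x : ℂ) :
    psMatrix n j φ *ᵥ Pi.single i x = Pi.single i x := by
  rw [psMatrix_mulVec_single, if_neg h, one_mul]

lemma psMatrix_mul_psMatrix (φ ψ : ℝ) :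
    psMatrix n j φ * psMatrix n j ψ = psMatrix n j (φ + ψ) := by
  rw [psMatrix, psMatrix, diagonal_mul_diagonal, psMatrix]
  congr 1
  ext i
  split_ifs
  · rw [← Complex.exp_add]; push_cast; ring_nf
  · exact one_mul 1

lemma psMatrix_zero : psMatrix n j 0 = 1 := by
  simp [psMatrix]

lemma star_psMatrix (φ : ℝ) : star (psMatrix n j φ) = psMatrix n j (-φ) := by
  rw [psMatrix, star_eq_conjTranspose, diagonal_conjTranspose, psMatrix]
  congr 1
  ext i
  split_ifs
  · rw [Pi.star_apply, if_pos ‹_›, star_def, ← Complex.exp_conj]; simp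
  · rw [Pi.star_apply, if_neg ‹_›, star_one]

lemma psMatrix_mem_unitary (φ : ℝ) : psMatrix n j φ ∈ unitary (Matrix (Fin n) (Fin n) ℂ) :=
  mem_unitary_of_map_add (psMatrix_mul_psMatrix j) (psMatrix_zero j) (star_psMatrix j) φ

end PhaseShifter

lemma bsMatrix_zero (n j : ℕ) : bsMatrix n j 0 = 1 := by
  ext i i'
  simp only [bsMatrix, Real.cos_zero, Real.sin_zero, Complex.ofReal_one, Complex.ofReal_zero,
    mul_zero, one_apply]
  split_ifs <;> first | rfl | (exfalso; omega)

lemma star_bsMatrix (n j : ℕ) (θ : ℝ) : star (bsMatrix n j θ) = bsMatrix n j (-θ) := by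
  ext i i'
  simp only [star_apply, bsMatrix, eq_comm (a := i'), and_comm (a := (i' : ℕ) = _)]
  split_ifs <;> first | (exfalso; tauto) |
    simp only [star_def, map_mul, Complex.conj_ofReal, Complex.conj_I, Real.cos_neg, Real.sin_neg,
      Complex.ofReal_neg, map_one, map_zero, neg_mul, mul_neg]

lemma bsMatrix_mulVec_single_of_ne {n j : ℕ} {i : Fin n} (hj : (i : ℕ) ≠ j)
    (hj' : (i : ℕ) ≠ j + 1) (θ : ℝ) (x : ℂ) :
    bsMatrix n j θ *ᵥ Pi.single i x = Pi.single i x := by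
  ext l
  simp [bsMatrix, hj, hj', Pi.single_apply]

lemma bsMatrix_mulVec_pair {n : ℕ} (j : Fin n) (θ : ℝ) (x y : ℂ) :
    bsMatrix (n + 1) j θ *ᵥ (Pi.single j.castSucc x + Pi.single j.succ y) =
      Pi.single j.castSucc (Real.cos θ * x + I * Real.sin θ * y) +
        Pi.single j.succ (I * Real.sin θ * x + Real.cos θ * y) := by
  ext l
  simp only [mulVec_add, mulVec_single, op_smul_eq_smul, Pi.add_apply, Pi.smul_apply, col_apply,
    bsMatrix, Fin.val_castSucc, Fin.val_succ, Fin.ext_iff, Pi.single_apply, smul_eq_mul, mul_ite,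
    mul_one, mul_zero, Nat.left_eq_add, Nat.add_eq_left, one_ne_zero,
    and_true, and_false, or_false, false_or]
  split_ifs <;> first | (exfalso; omega) | ring

lemma bsMatrix_mul_bsMatrix {n : ℕ} (j : Fin n) (θ θ' : ℝ) :
    bsMatrix (n + 1) j θ * bsMatrix (n + 1) j θ' = bsMatrix (n + 1) j (θ + θ') := by
  have hpair : ∀ x y : ℂ, bsMatrix (n + 1) j θ *ᵥ (bsMatrix (n + 1) j θ' *ᵥ
      (Pi.single j.castSucc x + Pi.single j.succ y)) =
      bsMatrix (n + 1) j (θ + θ') *ᵥ (Pi.single j.castSucc x + Pi.single j.succ y) := by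
    intro x y
    simp only [bsMatrix_mulVec_pair, Real.cos_add, Real.sin_add, Complex.ofReal_add,
      Complex.ofReal_sub, Complex.ofReal_mul]
    congr 2
    · linear_combination (Real.sin θ * Real.sin θ' * x : ℂ) * I_mul_I
    · linear_combination (Real.sin θ * Real.sin θ' * y : ℂ) * I_mul_I
  refine ext_of_mulVec_single fun p => ?_
  rw [← mulVec_mulVec]
  by_cases hp : p = j.castSucc
  · simpa [hp] using hpair 1 0
  by_cases hp' : p = j.succ
  · simpa [hp'] using hpair 0 1
  have h : (p : ℕ) ≠ j := fun h => hp (Fin.ext h)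
  have h' : (p : ℕ) ≠ j + 1 := fun h => hp' (Fin.ext h)
  simp only [bsMatrix_mulVec_single_of_ne h h']

lemma bsMatrix_mem_unitary {n : ℕ} (j : Fin n) (θ : ℝ) :
    bsMatrix (n + 1) j θ ∈ unitary (Matrix (Fin (n + 1)) (Fin (n + 1)) ℂ) :=
  mem_unitary_of_map_add (bsMatrix_mul_bsMatrix j) (bsMatrix_zero _ _) (star_bsMatrix _ _) θ

section Unitary

variable {ι R : Type*} [Fintype ι] [DecidableEq ι] [CommRing R] [StarRing R]
  {U : Matrix ι ι R}

lemma star_mulVec_single_of_mulVec_single (hU : U ∈ unitary (Matrix ι ι R)) {i : ι} {x y : R}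
    (h : U *ᵥ Pi.single i x = Pi.single i y) : star U *ᵥ Pi.single i y = Pi.single i x := by
  rw [← h, mulVec_mulVec, Unitary.star_mul_self_of_mem hU, one_mulVec]

lemma apply_eq_zero_of_mulVec_single_one (hU : U ∈ unitary (Matrix ι ι R)) {i k : ι}
    (h : U *ᵥ Pi.single i 1 = Pi.single i 1) (hki : k ≠ i) : U i k = 0 := by
  have := congrFun (star_mulVec_single_of_mulVec_single hU h) k
  rwa [mulVec_single_one, col_apply, star_apply, Pi.single_eq_of_ne hki, star_eq_zero] at this

end Unitary

lemma norm_eq_one_of_mulVec_single_one {ι : Type*} [Fintype ι] [DecidableEq ι]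
    {U : Matrix ι ι ℂ} (hU : U ∈ unitary (Matrix ι ι ℂ)) {k : ι} {z : ℂ}
    (h : U *ᵥ Pi.single k 1 = Pi.single k z) : ‖z‖ = 1 := by
  have hstar := congrFun (star_mulVec_single_of_mulVec_single hU h) k
  have hkk : U k k = z := by simpa using congrFun h k
  rw [mulVec_single, Pi.single_eq_same, Pi.smul_apply, col_apply, star_apply, hkk, op_smul_eq_mul,
    star_def, Complex.conj_mul'] at hstar
  exact (pow_eq_one_iff_of_nonneg (norm_nonneg z) two_ne_zero).1 (by exact_mod_cast hstar)

-- Gates acting on the first `m` of the `n + 1` modes; `j : Fin n` indexes the pair `j, j + 1`.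
def loppGates (n m : ℕ) : Set (Matrix (Fin (n + 1)) (Fin (n + 1)) ℂ) :=
  {M | ∃ (j : Fin (n + 1)) (φ : ℝ), (j : ℕ) < m ∧ M = psMatrix (n + 1) j φ} ∪
    {M | ∃ (j : Fin n) (θ : ℝ), (j : ℕ) + 1 < m ∧ M = bsMatrix (n + 1) j θ}

def loppCircuits (n m : ℕ) : Submonoid (Matrix (Fin (n + 1)) (Fin (n + 1)) ℂ) :=
  Submonoid.closure (loppGates n m)

section loppCircuits

variable {n m : ℕ} {M : Matrix (Fin (n + 1)) (Fin (n + 1)) ℂ}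

lemma psMatrix_mem_loppCircuits {j : Fin (n + 1)} (hj : (j : ℕ) < m) (φ : ℝ) :
    psMatrix (n + 1) j φ ∈ loppCircuits n m :=
  Submonoid.subset_closure (Or.inl ⟨j, φ, hj, rfl⟩)

lemma bsMatrix_mem_loppCircuits {j : Fin n} (hj : (j : ℕ) + 1 < m) (θ : ℝ) :
    bsMatrix (n + 1) j θ ∈ loppCircuits n m :=
  Submonoid.subset_closure (Or.inr ⟨j, θ, hj, rfl⟩)

lemma loppCircuits_mono {m' : ℕ} (h : m ≤ m') : loppCircuits n m ≤ loppCircuits n m' := by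
  refine Submonoid.closure_le.2 ?_
  rintro M (⟨j, φ, hj, rfl⟩ | ⟨j, θ, hj, rfl⟩)
  · exact psMatrix_mem_loppCircuits (hj.trans_le h) φ
  · exact bsMatrix_mem_loppCircuits (hj.trans_le h) θ

lemma loppCircuits_le_unitary :
    loppCircuits n m ≤ unitary (Matrix (Fin (n + 1)) (Fin (n + 1)) ℂ) := by
  refine Submonoid.closure_le.2 ?_
  rintro M (⟨j, φ, -, rfl⟩ | ⟨j, θ, -, rfl⟩)
  · exact psMatrix_mem_unitary j φ
  · exact bsMatrix_mem_unitary j θ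

lemma star_mem_loppCircuits (hM : M ∈ loppCircuits n m) : star M ∈ loppCircuits n m := by
  induction hM using Submonoid.closure_induction with
  | mem M hM =>
    rcases hM with ⟨j, φ, hj, rfl⟩ | ⟨j, θ, hj, rfl⟩
    · rw [star_psMatrix]; exact psMatrix_mem_loppCircuits hj _
    · rw [star_bsMatrix]; exact bsMatrix_mem_loppCircuits hj _
  | one => rw [star_one]; exact one_mem _
  | mul M N _ _ hM hN => rw [star_mul]; exact mul_mem hN hM

lemma mulVec_single_of_mem_loppCircuits (hM : M ∈ loppCircuits n m) {i : Fin (n + 1)}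
    (hi : m ≤ i) (x : ℂ) :
    M *ᵥ Pi.single i x = Pi.single i x := by
  induction hM using Submonoid.closure_induction with
  | mem M hM =>
    rcases hM with ⟨j, φ, hj, rfl⟩ | ⟨j, θ, hj, rfl⟩
    · exact psMatrix_mulVec_single_of_ne j (fun h => by omega) φ x
    · exact bsMatrix_mulVec_single_of_ne (by omega) (by omega) θ x
  | one => exact one_mulVec _
  | mul M N _ _ hM hN => rw [← mulVec_mulVec, hN, hM]

end loppCircuits

lemma exists_mem_loppCircuits_mulVec_pair {n : ℕ} (j : Fin n) (a b : ℂ) :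
    ∃ W ∈ loppCircuits n (j + 2), ∃ z : ℂ,
      W *ᵥ (Pi.single j.castSucc a + Pi.single j.succ b) = Pi.single j.succ z := by
  -- The phases turn `(a, b)` into `(‖a‖, I * ‖b‖)`, which the beam splitter of
  -- angle `θ = arg (‖b‖ + ‖a‖ * I)` sends onto the second mode, as `‖a‖ cos θ = ‖b‖ sin θ`.
  obtain ⟨φ, hφ⟩ := exists_exp_I_mul_eq_of_norm_eq (z := a) (w := ‖a‖) (by simp)
  obtain ⟨ψ, hψ⟩ := exists_exp_I_mul_eq_of_norm_eq (z := b) (w := I * ‖b‖) (by simp)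
  set w : ℂ := ‖b‖ + ‖a‖ * I
  set θ := arg w
  have hθ : (Real.cos θ * ‖a‖ + I * Real.sin θ * (I * ‖b‖) : ℂ) = 0 := by
    have hcos : ‖w‖ * Real.cos θ = ‖b‖ := by rw [norm_mul_cos_arg]; simp [w]
    have hsin : ‖w‖ * Real.sin θ = ‖a‖ := by rw [norm_mul_sin_arg]; simp [w]
    have h : Real.cos θ * ‖a‖ = Real.sin θ * ‖b‖ := by rw [← hcos, ← hsin]; ring
    have h' : (Real.cos θ * ‖a‖ : ℂ) = Real.sin θ * ‖b‖ := by exact_mod_cast h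
    linear_combination h' + (Real.sin θ * ‖b‖ : ℂ) * I_mul_I
  have hne : j.castSucc ≠ j.succ := Fin.castSucc_lt_succ.ne
  refine ⟨bsMatrix (n + 1) j θ * psMatrix (n + 1) j.castSucc φ * psMatrix (n + 1) j.succ ψ,
    mul_mem (mul_mem (bsMatrix_mem_loppCircuits (by omega) θ)
      (psMatrix_mem_loppCircuits (by simp) φ)) (psMatrix_mem_loppCircuits (by simp) ψ), ?_⟩
  rw [← mulVec_mulVec, ← mulVec_mulVec, mulVec_add, psMatrix_mulVec_single_of_ne _ hne,
    psMatrix_mulVec_single_self, hψ, mulVec_add, psMatrix_mulVec_single_self, hφ,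
    psMatrix_mulVec_single_of_ne _ hne.symm, bsMatrix_mulVec_pair, hθ, Pi.single_zero, zero_add]
  exact ⟨_, rfl⟩

lemma exists_mem_loppCircuits_mulVec_eq_single {n : ℕ} (k : Fin (n + 1)) (c : Fin (n + 1) → ℂ)
    (hc : ∀ l, k < l → c l = 0) :
    ∃ V ∈ loppCircuits n (k + 1), ∃ z : ℂ, V *ᵥ c = Pi.single k z := by
  induction k using Fin.induction generalizing c with
  | zero =>
    refine ⟨1, one_mem _, c 0, ?_⟩
    ext l
    rcases eq_or_ne l 0 with rfl | hl
    · simp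
    · rw [one_mulVec, Pi.single_eq_of_ne hl, hc l (Fin.pos_iff_ne_zero.2 hl)]
  | succ i ih =>
    set c' := c - Pi.single i.succ (c i.succ)
    have hc' : ∀ l, i.castSucc < l → c' l = 0 := by
      intro l hl
      rcases eq_or_ne l i.succ with rfl | hl'
      · simp [c']
      · have : i.succ < l := lt_of_le_of_ne (Fin.castSucc_lt_iff_succ_le.1 hl) hl'.symm
        simp [c', hc l this, Pi.single_eq_of_ne hl']
    obtain ⟨V, hV, z, hVc⟩ := ih c' hc'
    obtain ⟨W, hW, z', hWc⟩ := exists_mem_loppCircuits_mulVec_pair i z (c i.succ)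
    refine ⟨W * V, mul_mem (by simpa using hW) (loppCircuits_mono (by simp) hV), z', ?_⟩
    rw [← mulVec_mulVec, ← sub_add_cancel c (Pi.single i.succ (c i.succ)), mulVec_add, hVc,
      mulVec_single_of_mem_loppCircuits hV (by simp), hWc]

theorem mem_loppCircuits_of_mulVec_single {n : ℕ} (m : ℕ) (hm : m ≤ n + 1)
    {U : Matrix (Fin (n + 1)) (Fin (n + 1)) ℂ}
    (hU : U ∈ unitary (Matrix (Fin (n + 1)) (Fin (n + 1)) ℂ))
    (hfix : ∀ i : Fin (n + 1), m ≤ i → U *ᵥ Pi.single i 1 = Pi.single i 1) :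
    U ∈ loppCircuits n m := by
  induction m generalizing U with
  | zero =>
    convert one_mem (loppCircuits n 0)
    exact ext_of_mulVec_single fun i => by rw [hfix i (Nat.zero_le _), one_mulVec]
  | succ m ih =>
    set k : Fin (n + 1) := ⟨m, hm⟩
    have hcol : ∀ l, k < l → (U *ᵥ Pi.single k 1) l = 0 := fun l hl => by
      rw [mulVec_single_one, col_apply]
      exact apply_eq_zero_of_mulVec_single_one hU (hfix l hl) hl.ne
    obtain ⟨V, hV, z, hVc⟩ := exists_mem_loppCircuits_mulVec_eq_single k _ hcol
    have hz : ‖z‖ = 1 := norm_eq_one_of_mulVec_single_one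
      (mul_mem (loppCircuits_le_unitary hV) hU) (by rw [← mulVec_mulVec, hVc])
    obtain ⟨φ, hφ⟩ := exists_exp_I_mul_eq_of_norm_eq (w := 1) (by rw [hz, norm_one])
    set P := psMatrix (n + 1) k φ * V
    have hP : P ∈ loppCircuits n (m + 1) :=
      mul_mem (psMatrix_mem_loppCircuits (Nat.lt_succ_self m) φ) hV
    have hPU : P * U ∈ loppCircuits n m := by
      refine ih (by omega) (mul_mem (loppCircuits_le_unitary hP) hU) fun i hi => ?_
      rw [← mulVec_mulVec, ← mulVec_mulVec]
      rcases eq_or_lt_of_le hi with hi | hi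
      · obtain rfl : k = i := Fin.ext hi
        rw [hVc, psMatrix_mulVec_single_self, hφ]
      · rw [hfix i hi, mulVec_single_of_mem_loppCircuits hV hi,
          psMatrix_mulVec_single_of_ne _ (Fin.ne_of_gt hi)]
    rw [← one_mul U, ← Unitary.star_mul_self_of_mem (loppCircuits_le_unitary hP), mul_assoc]
    exact mul_mem (star_mem_loppCircuits hP) (loppCircuits_mono m.le_succ hPU)

theorem lopp_universality_general (n : ℕ) (U : Matrix.unitaryGroup (Fin n) ℂ) :
    ∃ L : List (Matrix (Fin n) (Fin n) ℂ),
      (∀ M ∈ L, (∃ (j : Fin n) (φ : ℝ), M = psMatrix n j φ) ∨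
        (∃ (j : ℕ) (θ : ℝ), j + 1 < n ∧ M = bsMatrix n j θ)) ∧
      (U : Matrix (Fin n) (Fin n) ℂ) = L.prod := by
  cases n with
  | zero => exact ⟨[], by simp, Subsingleton.elim _ _⟩
  | succ n =>
    have hU := mem_loppCircuits_of_mulVec_single (n + 1) le_rfl U.2 fun i hi => by omega
    obtain ⟨L, hL, hprod⟩ := Submonoid.exists_list_of_mem_closure hU
    refine ⟨L, fun M hM => ?_, hprod.symm⟩
    rcases hL M hM with ⟨j, φ, -, rfl⟩ | ⟨j, θ, hj, rfl⟩
    · exact Or.inl ⟨j, φ, rfl⟩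
    · exact Or.inr ⟨j, θ, hj, rfl⟩

theorem lopp_universality (n : ℕ) (hn : 1 ≤ n) (U : Matrix.unitaryGroup (Fin n) ℂ) :
    ∃ L : List (Matrix (Fin n) (Fin n) ℂ),
      (∀ M ∈ L, (∃ (j : Fin n) (φ : ℝ), M = psMatrix n j φ) ∨
        (∃ (j : ℕ) (θ : ℝ), j + 1 < n ∧ M = bsMatrix n j θ)) ∧
      (U : Matrix (Fin n) (Fin n) ℂ) = L.prod :=
  lopp_universality_general n U
end
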